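/- arXiv:1603.08400 — 9 statements merged into one kernel-verified Lean document; each statement's English description precedes it below -/
import Mathlib

section
/- Let X be a finite group possessing a Hall π-subgroup, and let M be a normal subgroup of X. Then M possesses a Hall π-subgroup. -/
/-- A Hall π-subgroup: every prime divisor of its order lies in π,
and its index is coprime to every prime in π. -/
def IsHallPi (π : Set ℕ) {G : Type*} [Group G] (H : Subgroup G) : Prop :=
  (∀ p : ℕ, p.Prime → p ∣ Nat.card H → p ∈ π) ∧
  (∀ p ∈ π, p.Prime → ¬ p ∣ H.index)

/-! The candidate is `H ∩ M`: its order divides `|H|`, and `|M : H ∩ M| = |HM : H|` divides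
`|X : H|` because `|HM : M| = |H : H ∩ M|` for normal `M`. -/

namespace Subgroup

variable {G : Type*} [Group G]

theorem card_subgroupOf_dvd_card (H K : Subgroup G) : Nat.card (H.subgroupOf K) ∣ Nat.card H := by
  rw [← card_map_of_injective K.subtype_injective, subgroupOf_map_subtype]
  exact card_dvd_of_le inf_le_left

theorem relIndex_sup_eq_relIndex_of_normal (H K : Subgroup G) [K.Normal]
    (hK : K.relIndex H ≠ 0) :
    H.relIndex (H ⊔ K) = H.relIndex K := by
  have via_H := relIndex_mul_relIndex (H ⊓ K) H (H ⊔ K) inf_le_left le_sup_left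
  have via_K := relIndex_mul_relIndex (H ⊓ K) K (H ⊔ K) inf_le_right le_sup_right
  rw [inf_relIndex_left, ← via_K, inf_relIndex_right, relIndex_sup_right, mul_comm] at via_H
  exact mul_right_cancel₀ hK via_H

theorem relIndex_dvd_index_of_normal_right (H K : Subgroup G) [K.Normal]
    (hK : K.relIndex H ≠ 0) : H.relIndex K ∣ H.index :=
  relIndex_sup_eq_relIndex_of_normal H K hK ▸ relIndex_dvd_index_of_le le_sup_left

end Subgroup

theorem hall_subgroup_of_normal {X : Type*} [Group X] [Finite X] (π : Set ℕ)
    (H : Subgroup X) (hH : IsHallPi π H)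
    (M : Subgroup X) (hM : M.Normal) :
    ∃ K : Subgroup M, IsHallPi π K :=
  ⟨H.subgroupOf M,
    fun p hp hdvd => hH.1 p hp (hdvd.trans (H.card_subgroupOf_dvd_card M)),
    fun p hpπ hp hdvd => hH.2 p hpπ hp
      (hdvd.trans (H.relIndex_dvd_index_of_normal_right M Subgroup.index_ne_zero_of_finite))⟩
end

section
/- Let G = G₁ × G₂ be a finite metacyclic group with G₁ ≅ G₂. Then G₁ and G₂ are cyclic. -/
/-- The quotient by a normal subgroup is cyclic. -/
def QuotientIsCyclic {G : Type*} [Group G] (N : Subgroup G) (hN : N.Normal) : Prop :=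
  letI := hN; IsCyclic (G ⧸ N)

/-- A group is metacyclic if it has a cyclic normal subgroup with cyclic quotient. -/
def IsMetacyclic (G : Type*) [Group G] : Prop :=
  ∃ (N : Subgroup G) (hN : N.Normal), IsCyclic N ∧ QuotientIsCyclic N hN

theorem metacyclic_direct_product_iso_factors_cyclic
    {G₁ G₂ : Type*} [Group G₁] [Group G₂] [Finite G₁] [Finite G₂]
    (hmeta : IsMetacyclic (G₁ × G₂)) (hiso : Nonempty (G₁ ≃* G₂)) :
    IsCyclic G₁ ∧ IsCyclic G₂ := by
  classical
  obtain ⟨e⟩ := hiso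
  obtain ⟨N, hN, hNc, hQc⟩ := hmeta
  haveI : N.Normal := hN
  haveI : IsCyclic (↥N) := hNc
  haveI : IsCyclic ((G₁ × G₂) ⧸ N) := hQc
  haveI : Fintype (↥N) := Fintype.ofFinite _
  haveI : Fintype ((G₁ × G₂) ⧸ N) := Fintype.ofFinite _
  haveI : Fintype G₁ := Fintype.ofFinite _
  haveI : Fintype G₂ := Fintype.ofFinite _
  haveI : Fintype (G₁ × G₂) := inferInstance
  -- quotient is commutative
  have hQcomm : ∀ u v : (G₁ × G₂) ⧸ N, u * v = v * u := by
    obtain ⟨z, hz⟩ := hQc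
    intro u v
    obtain ⟨i, hi⟩ := hz u
    obtain ⟨j, hj⟩ := hz v
    rw [← hi, ← hj, ← zpow_add, ← zpow_add, add_comm]
  -- step 1: G₁ is commutative
  have habel : ∀ a b : G₁, a * b = b * a := by
    intro a b
    set c : G₁ := a * b * a⁻¹ * b⁻¹ with hc
    suffices hc1 : c = 1 by
      rw [hc] at hc1
      calc a * b = a * b * a⁻¹ * b⁻¹ * (b * a) := by group
        _ = b * a := by rw [hc1, one_mul]
    -- (c, 1) ∈ N and (1, e c) ∈ N
    have hmemN : ∀ g : G₁ × G₂, ((g : (G₁ × G₂) ⧸ N) = 1) → g ∈ N := by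
      intro g hg
      exact (QuotientGroup.eq_one_iff g).mp hg
    have hx : ((c, 1) : G₁ × G₂) ∈ N := by
      apply hmemN
      have : ((c, (1 : G₂)) : G₁ × G₂) =
          (a, 1) * (b, 1) * ((a, 1) : G₁ × G₂)⁻¹ * ((b, 1) : G₁ × G₂)⁻¹ := by
        simp [hc, Prod.ext_iff]
      rw [this]
      rw [QuotientGroup.mk_mul, QuotientGroup.mk_mul, QuotientGroup.mk_mul,
        QuotientGroup.mk_inv, QuotientGroup.mk_inv]
      rw [hQcomm (((a,1) : G₁ × G₂) : (G₁ × G₂) ⧸ N) (((b,1) : G₁ × G₂) : (G₁ × G₂) ⧸ N)]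
      group
    have hy : ((1, e c) : G₁ × G₂) ∈ N := by
      apply hmemN
      have : ((1 : G₁), e c) = ((1 : G₁), e a) * (1, e b) * (((1 : G₁), e a))⁻¹ *
          (((1 : G₁), e b))⁻¹ := by
        simp [hc, Prod.ext_iff, map_mul, map_inv]
      rw [this]
      rw [QuotientGroup.mk_mul, QuotientGroup.mk_mul, QuotientGroup.mk_mul,
        QuotientGroup.mk_inv, QuotientGroup.mk_inv]
      rw [hQcomm ((((1, e a)) : G₁ × G₂) : (G₁ × G₂) ⧸ N) ((((1, e b)) : G₁ × G₂) : (G₁ × G₂) ⧸ N)]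
      group
    set m := orderOf c with hm
    have hm0 : 0 < m := orderOf_pos c
    set x : ↥N := ⟨((c, 1) : G₁ × G₂), hx⟩ with hxdef
    set y : ↥N := ⟨((1, e c) : G₁ × G₂), hy⟩ with hydef
    have hxm : orderOf x = m := by
      rw [hxdef, Subgroup.orderOf_mk, Prod.orderOf_mk]
      simp [hm]
    have hym : y ^ m = 1 := by
      have : orderOf y = m := by
        rw [hydef, Subgroup.orderOf_mk, Prod.orderOf_mk]
        simp [hm, orderOf_injective e.toMonoidHom e.injective c]
      rw [← this]; exact pow_orderOf_eq_one y
    -- the set of solutions of z^m = 1 in N has card ≤ m and contains zpowers x of card m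
    have hSle : (Finset.univ.filter fun z : ↥N => z ^ m = 1).card ≤ m := IsCyclic.card_pow_eq_one_le hm0
    have hsub : (Subgroup.zpowers x : Set ↥N).toFinset ⊆ (Finset.univ.filter fun z : ↥N => z ^ m = 1) := by
      intro z hz
      simp only [Set.mem_toFinset, SetLike.mem_coe, Subgroup.mem_zpowers_iff] at hz
      obtain ⟨k, hk⟩ := hz
      simp only [Finset.mem_filter, Finset.mem_univ, true_and]
      rw [← hk, ← zpow_natCast, ← zpow_mul, mul_comm, zpow_mul, zpow_natCast, ← hxm,
        pow_orderOf_eq_one, one_zpow]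
    have hcardzp : (Subgroup.zpowers x : Set ↥N).toFinset.card = m := by
      simp only [Set.toFinset_card, SetLike.coe_sort_coe, ← Nat.card_eq_fintype_card,
        Nat.card_zpowers, hxm]
    have heq : (Subgroup.zpowers x : Set ↥N).toFinset = (Finset.univ.filter fun z : ↥N => z ^ m = 1) :=
      Finset.eq_of_subset_of_card_le hsub (by rw [hcardzp]; exact hSle)
    have hymem : y ∈ (Subgroup.zpowers x : Set ↥N).toFinset := by
      rw [heq]
      simp only [Finset.mem_filter, Finset.mem_univ, true_and]
      exact hym
    rw [Set.mem_toFinset] at hymem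
    obtain ⟨k, hk⟩ := hymem
    have : ((x : G₁ × G₂) ^ k) = (y : G₁ × G₂) := by
      rw [← hk]; rfl
    have h2 : e c = 1 := by
      have := congrArg Prod.snd this
      simpa [hxdef, hydef] using this.symm
    have : c = 1 := by
      have := congrArg e.symm h2
      simpa using this
    exact this
  have habel₂ : ∀ a b : G₂, a * b = b * a := by
    intro a b
    have := habel (e.symm a) (e.symm b)
    have h := congrArg e this
    simpa using h
  letI cg₁ : CommGroup G₁ := { (inferInstance : Group G₁) with mul_comm := habel }
  letI cg₂ : CommGroup G₂ := { (inferInstance : Group G₂) with mul_comm := habel₂ }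
  -- step 2: counting solutions of x^n = 1
  have hcount : ∀ n : ℕ, 0 < n → (Finset.univ.filter fun a : G₁ => a ^ n = 1).card ≤ n := by
    intro n hn
    set S₁ : Finset G₁ := (Finset.univ.filter fun a : G₁ => a ^ n = 1) with hS₁
    set S₂ : Finset G₂ := (Finset.univ.filter fun a : G₂ => a ^ n = 1) with hS₂
    have hcard₂ : S₂.card = S₁.card := by
      apply Finset.card_bij' (fun b _ => e.symm b) (fun a _ => e a)
      · intro b hb
        simp only [hS₂, Finset.mem_filter, Finset.mem_univ, true_and] at hb
        simp only [hS₁, Finset.mem_filter, Finset.mem_univ, true_and]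
        rw [← map_pow, hb, map_one]
      · intro a ha
        simp only [hS₁, Finset.mem_filter, Finset.mem_univ, true_and] at ha
        simp only [hS₂, Finset.mem_filter, Finset.mem_univ, true_and]
        rw [← map_pow, ha, map_one]
      · intro b _; simp
      · intro a _; simp
    set K : Finset (G₁ × G₂) := (Finset.univ.filter fun g : G₁ × G₂ => g ^ n = 1) with hK
    have hKcard : K.card = S₁.card * S₂.card := by
      rw [← Finset.card_product]
      congr 1
      ext ⟨a, b⟩
      simp [hK, hS₁, hS₂, Prod.ext_iff, Prod.pow_fst, Prod.pow_snd]
    -- bound K.card ≤ n * n via the quotient map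
    have hKle : K.card ≤ n * n := by
      have := Finset.card_le_mul_card_image (f := fun g : G₁ × G₂ => (g : (G₁ × G₂) ⧸ N)) K n ?_
      · refine this.trans ?_
        have himle : (K.image (fun g : G₁ × G₂ => (g : (G₁ × G₂) ⧸ N))).card ≤ n := by
          have hsub : K.image (fun g : G₁ × G₂ => (g : (G₁ × G₂) ⧸ N)) ⊆
              (Finset.univ.filter fun q : (G₁ × G₂) ⧸ N => q ^ n = 1) := by
            intro q hq
            simp only [Finset.mem_image] at hq
            obtain ⟨g, hg, rfl⟩ := hq
            simp only [hK, Finset.mem_filter, Finset.mem_univ, true_and] at hg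
            simp only [Finset.mem_filter, Finset.mem_univ, true_and]
            rw [← QuotientGroup.mk_pow, hg, QuotientGroup.mk_one]
          exact (Finset.card_le_card hsub).trans (IsCyclic.card_pow_eq_one_le hn)
        exact Nat.mul_le_mul_left n himle
      · -- fibers have size ≤ n
        intro q hq
        simp only [Finset.mem_image] at hq
        obtain ⟨g₀, hg₀, rfl⟩ := hq
        have hg₀K : g₀ ^ n = 1 := by
          simpa [hK] using hg₀
        set T : Finset (G₁ × G₂) :=
          (Finset.univ.filter fun z : ↥N => z ^ n = 1).image (fun z : ↥N => z.val) with hT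
        calc (K.filter (fun g : G₁ × G₂ =>
            ((g : (G₁ × G₂) ⧸ N) = (g₀ : (G₁ × G₂) ⧸ N)))).card
            ≤ T.card := by
              apply Finset.card_le_card_of_injOn (fun g => g₀⁻¹ * g)
              · intro g hg
                rcases Finset.mem_filter.mp hg with ⟨hgK, hgq⟩
                have hgn : g ^ n = 1 := by simpa [hK] using hgK
                have hmem : g₀⁻¹ * g ∈ N := QuotientGroup.eq.mp hgq.symm
                have hpow : ((g₀⁻¹ * g) ^ n : G₁ × G₂) = 1 := by
                  rw [mul_pow, inv_pow, hgn, hg₀K, inv_one, one_mul]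
                refine Finset.mem_image.mpr ⟨⟨g₀⁻¹ * g, hmem⟩, ?_, rfl⟩
                simp only [Finset.mem_filter, Finset.mem_univ, true_and]
                exact Subtype.ext (by simpa using hpow)
              · intro g hg g' hg' h
                exact mul_left_cancel h
          _ ≤ (Finset.univ.filter fun z : ↥N => z ^ n = 1).card := Finset.card_image_le
          _ ≤ n := IsCyclic.card_pow_eq_one_le hn
    have : S₁.card * S₁.card ≤ n * n := by
      calc S₁.card * S₁.card = K.card := by rw [hKcard, hcard₂]
        _ ≤ n * n := hKle
    by_contra hlt
    push_neg at hlt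
    have : n * n < S₁.card * S₁.card := Nat.mul_lt_mul_of_lt_of_lt hlt hlt
    omega
  have h1 : IsCyclic G₁ := isCyclic_of_card_pow_eq_one_le hcount
  exact ⟨h1, isCyclic_of_surjective e.toMonoidHom e.surjective⟩
end

section
/- Let G be a finite metacyclic group that is the direct product of two isomorphic nonabelian subgroups G₁ and G₂. Then a contradiction follows; i.e., no finite metacyclic group is the direct product of two isomorphic nonabelian groups. -/
/-!
The quotient of a metacyclic group by its cyclic normal subgroup `N` is abelian, so the derived
subgroup lies in `N` and is cyclic. The derived subgroup of `G₁ × G₂` is `G₁' × G₂'`, and a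
product of two cyclic groups is cyclic only when their orders are coprime. Since `G₁' ≅ G₂'`, this
forces `G₁'` to be trivial, i.e. `G₁` to be abelian.
-/

open scoped commutatorElement

theorem IsMetacyclic.isCyclic_commutator {G : Type*} [Group G] (h : IsMetacyclic G) :
    IsCyclic (commutator G) := by
  obtain ⟨N, hN, hNcyc, hQcyc⟩ := h
  have : IsCyclic (G ⧸ N) := hQcyc
  let := IsCyclic.commGroup (α := G ⧸ N)
  exact Subgroup.isCyclic_of_le
    (Subgroup.Normal.quotient_commutative_iff_commutator_le (N := N).mp inferInstance)

theorem commutator_prod (G₁ G₂ : Type*) [Group G₁] [Group G₂] :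
    commutator (G₁ × G₂) = (commutator G₁).prod (commutator G₂) := by
  simp only [commutator_def, ← Subgroup.top_prod_top, Subgroup.commutator_prod_prod]

theorem MulEquiv.card_commutator_eq {G H : Type*} [Group G] [Group H] (e : G ≃* H) :
    Nat.card (commutator G) = Nat.card (commutator H) := by
  rw [← Subgroup.card_map_of_injective (f := e.toMonoidHom) e.injective, map_commutator_eq,
    MonoidHom.range_eq_top.mpr e.surjective, commutator_def]

theorem card_eq_one_of_isCyclic_prod {H K : Type*} [Group H] [Group K] [IsCyclic (H × K)]
    (h : Nat.card H = Nat.card K) : Nat.card H = 1 := by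
  have hcop := (Group.isCyclic_prod_iff.mp ‹_›).2.2
  rwa [← h, Nat.coprime_self] at hcop

theorem no_metacyclic_product_of_isomorphic_nonabelian_general
    {G₁ G₂ : Type*} [Group G₁] [Group G₂]
    (hmeta : IsMetacyclic (G₁ × G₂)) (hiso : Nonempty (G₁ ≃* G₂))
    (hnonab₁ : ∃ x y : G₁, x * y ≠ y * x) :
    False := by
  obtain ⟨e⟩ := hiso
  obtain ⟨a, b, hab⟩ := hnonab₁
  have : IsCyclic (commutator G₁ × commutator G₂) := by
    have hcyc := hmeta.isCyclic_commutator
    rw [commutator_prod] at hcyc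
    exact (Subgroup.prodEquiv _ _).isCyclic.mp hcyc
  have htriv : commutator G₁ = ⊥ :=
    Subgroup.card_eq_one.mp (card_eq_one_of_isCyclic_prod e.card_commutator_eq)
  have hcomm : ⁅a, b⁆ ∈ commutator G₁ := Subgroup.commutator_mem_commutator trivial trivial
  rw [htriv, Subgroup.mem_bot, commutatorElement_eq_one_iff_mul_comm] at hcomm
  exact hab hcomm

theorem no_metacyclic_product_of_isomorphic_nonabelian
    {G₁ G₂ : Type*} [Group G₁] [Group G₂] [Finite G₁] [Finite G₂]
    (hmeta : IsMetacyclic (G₁ × G₂)) (hiso : Nonempty (G₁ ≃* G₂))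
    (hnonab₁ : ∃ x y : G₁, x * y ≠ y * x) (hnonab₂ : ∃ x y : G₂, x * y ≠ y * x) :
    False :=
  no_metacyclic_product_of_isomorphic_nonabelian_general hmeta hiso hnonab₁
end

section
/- Let Γ be a connected simple graph of odd order in which every vertex has degree 4, and let X ≤ Aut(Γ) be a vertex-transitive subgroup of odd order. Then X acts regularly on the vertex set of Γ. -/
/-!
The stabilizer `X_v` has odd order, so its orbits on the four neighbours of `v` have odd
length, and it fixes either one or all four of them. Since conjugate stabilizers have the
same order, `X_v` fixes a neighbour `u` exactly when `X_u = X_v`; the edges with equal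
stabilizers at both ends form an `X`-invariant, hence regular, subgraph of degree 1 or 4.
Degree 1 would be a perfect matching on an odd number of vertices, so every edge joins
vertices with equal stabilizers, and by connectedness all stabilizers coincide: they are the
kernel of the action, which is trivial.
-/


open MulAction

namespace MulAction

variable {G α : Type*} [Group G] [MulAction G α]

theorem odd_ncard_orbit [Finite G] (hG : Odd (Nat.card G)) (a : α) : Odd (orbit G a).ncard :=
  index_stabilizer (G := G) a ▸ hG.of_dvd_nat (Subgroup.index_dvd_card _)

theorem three_le_ncard_orbit [Finite G] (hG : Odd (Nat.card G)) {a : α}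
    (ha : a ∉ fixedPoints G α) : 3 ≤ (orbit G a).ncard := by
  have hne : (orbit G a).ncard ≠ 1 := fun h ↦ by
    obtain ⟨b, hb⟩ := Set.ncard_eq_one.mp h
    exact ha fun g ↦ (Set.eq_of_mem_singleton (hb ▸ mem_orbit a g)).trans
      (Set.eq_of_mem_singleton (hb ▸ mem_orbit_self a)).symm
  obtain ⟨k, hk⟩ := odd_ncard_orbit hG a
  omega

theorem orbit_subset_diff_fixedPoints {s : Set α} (hs : ∀ g : G, ∀ x ∈ s, g • x ∈ s) {a : α}
    (ha : a ∈ s \ fixedPoints G α) : orbit G a ⊆ s \ fixedPoints G α := by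
  rintro _ ⟨g, rfl⟩
  refine ⟨hs g a ha.1, fun hfix ↦ ha.2 ?_⟩
  have : a = g • a := by simpa using hfix g⁻¹
  rwa [this]

theorem ncard_inter_fixedPoints_eq_one_or_four [Finite G] (hG : Odd (Nat.card G)) {s : Set α}
    (hs : ∀ g : G, ∀ x ∈ s, g • x ∈ s) (hs4 : s.ncard = 4) :
    (s ∩ fixedPoints G α).ncard = 1 ∨ (s ∩ fixedPoints G α).ncard = 4 := by
  have hfin : s.Finite := Set.finite_of_ncard_ne_zero (by omega)
  have hsplit := Set.ncard_inter_add_ncard_sdiff_eq_ncard s (fixedPoints G α) hfin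
  set N := s \ fixedPoints G α
  -- the points of `s` that are not fixed fall into orbits of odd length at least 3
  suffices N.ncard = 0 ∨ N.ncard = 3 by omega
  obtain hN | ⟨y, hy⟩ := N.eq_empty_or_nonempty
  · simp [hN]
  right
  have hNfin : N.Finite := hfin.sdiff
  have hN4 : N.ncard ≤ 4 := hs4 ▸ Set.ncard_le_ncard Set.sdiff_subset hfin
  have hy3 := three_le_ncard_orbit hG hy.2
  have hyN : orbit G y ⊆ N := orbit_subset_diff_fixedPoints hs hy
  suffices orbit G y = N by
    obtain ⟨k, hk⟩ := odd_ncard_orbit hG y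
    rw [← this] at hN4 ⊢
    omega
  refine hyN.antisymm fun z hz ↦ ?_
  by_contra hzy
  have hdisj : Disjoint (orbit G y) (orbit G z) :=
    (orbit.eq_or_disjoint y z).resolve_left fun h ↦ hzy (h ▸ mem_orbit_self z)
  have hzN : orbit G z ⊆ N := orbit_subset_diff_fixedPoints hs hz
  have hunion := Set.ncard_le_ncard (Set.union_subset hyN hzN) hNfin
  rw [Set.ncard_union_eq hdisj (hNfin.subset hyN) (hNfin.subset hzN)] at hunion
  have hz3 := three_le_ncard_orbit hG hz.2
  omega

theorem stabilizer_eq_of_le [Finite G] [IsPretransitive G α] {a b : α}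
    (h : stabilizer G a ≤ stabilizer G b) : stabilizer G a = stabilizer G b := by
  obtain ⟨g, rfl⟩ := exists_smul_eq G a b
  exact Subgroup.eq_of_le_of_card_ge h (Nat.card_congr (stabilizerEquivStabilizer rfl).toEquiv).ge

theorem stabilizer_smul_eq_stabilizer_smul_iff (g : G) (a b : α) :
    stabilizer G (g • a) = stabilizer G (g • b) ↔ stabilizer G a = stabilizer G b := by
  simp only [stabilizer_smul_eq_stabilizer_map_conj]
  exact (Subgroup.map_injective (MulAut.conj g).injective).eq_iff

end MulAction

open scoped Pointwise

namespace SimpleGraph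

variable {G V : Type*} [Group G] [MulAction G V] (Γ : SimpleGraph V)

theorem even_card_of_forall_odd_ncard_neighborSet [Finite V]
    (h : ∀ v, Odd (Γ.neighborSet v).ncard) : Even (Nat.card V) := by
  classical
  have := Fintype.ofFinite V
  have hall : ({v | Odd (Γ.degree v)} : Finset V) = Finset.univ := by
    refine Finset.eq_univ_of_forall fun v ↦ Finset.mem_filter.2 ⟨Finset.mem_univ v, ?_⟩
    rw [← card_neighborSet_eq_degree, ← Nat.card_eq_fintype_card, Nat.card_coe_set_eq]
    exact h v
  simpa [hall, Nat.card_eq_fintype_card] using Γ.even_card_odd_degree_vertices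

variable (G) in
def equalStabilizerGraph : SimpleGraph V where
  Adj u v := Γ.Adj u v ∧ stabilizer G u = stabilizer G v
  symm := ⟨fun _ _ h ↦ ⟨h.1.symm, h.2.symm⟩⟩
  loopless := ⟨fun u h ↦ Γ.loopless.irrefl u h.1⟩

variable {Γ}

theorem equalStabilizerGraph_adj_smul (hΓ : ∀ (g : G) u v, Γ.Adj (g • u) (g • v) ↔ Γ.Adj u v)
    (g : G) (u v : V) :
    (Γ.equalStabilizerGraph G).Adj (g • u) (g • v) ↔ (Γ.equalStabilizerGraph G).Adj u v :=
  and_congr (hΓ g u v) (stabilizer_smul_eq_stabilizer_smul_iff g u v)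

theorem neighborSet_equalStabilizerGraph_smul
    (hΓ : ∀ (g : G) u v, Γ.Adj (g • u) (g • v) ↔ Γ.Adj u v) (g : G) (v : V) :
    (Γ.equalStabilizerGraph G).neighborSet (g • v) =
      g • (Γ.equalStabilizerGraph G).neighborSet v := by
  ext u
  rw [Set.mem_smul_set_iff_inv_smul_mem, mem_neighborSet, mem_neighborSet,
    ← equalStabilizerGraph_adj_smul hΓ g v (g⁻¹ • u), smul_inv_smul]

theorem ncard_neighborSet_equalStabilizerGraph_eq [IsPretransitive G V]
    (hΓ : ∀ (g : G) u v, Γ.Adj (g • u) (g • v) ↔ Γ.Adj u v) (u v : V) :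
    ((Γ.equalStabilizerGraph G).neighborSet u).ncard =
      ((Γ.equalStabilizerGraph G).neighborSet v).ncard := by
  obtain ⟨g, rfl⟩ := exists_smul_eq G u v
  rw [neighborSet_equalStabilizerGraph_smul hΓ, Set.ncard_smul_set]

theorem neighborSet_equalStabilizerGraph [Finite G] [IsPretransitive G V] (v : V) :
    (Γ.equalStabilizerGraph G).neighborSet v =
      Γ.neighborSet v ∩ fixedPoints (stabilizer G v) V := by
  ext u
  have : u ∈ fixedPoints (stabilizer G v) V ↔ stabilizer G v ≤ stabilizer G u :=
    ⟨fun h g hg ↦ h ⟨g, hg⟩, fun h g ↦ h g.2⟩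
  rw [Set.mem_inter_iff, this]
  exact and_congr_right fun _ ↦ ⟨le_of_eq, stabilizer_eq_of_le⟩

theorem ncard_neighborSet_equalStabilizerGraph_eq_one_or_four [Finite G] [IsPretransitive G V]
    (hG : Odd (Nat.card G)) (hΓ : ∀ (g : G) u v, Γ.Adj (g • u) (g • v) ↔ Γ.Adj u v) {v : V}
    (hv : (Γ.neighborSet v).ncard = 4) :
    ((Γ.equalStabilizerGraph G).neighborSet v).ncard = 1 ∨
      ((Γ.equalStabilizerGraph G).neighborSet v).ncard = 4 := by
  rw [neighborSet_equalStabilizerGraph]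
  refine ncard_inter_fixedPoints_eq_one_or_four (hG.of_dvd_nat (Subgroup.card_subgroup_dvd_card _))
    (fun g u hu ↦ ?_) hv
  have hgv : (g : G) • v = v := g.2
  simpa [Subgroup.smul_def, hgv] using (hΓ g v u).2 hu

theorem Preconnected.eq_of_forall_adj {β : Type*} {f : V → β} (hΓ : Γ.Preconnected)
    (hf : ∀ u v, Γ.Adj u v → f u = f v) (u v : V) : f u = f v := by
  induction (reachable_iff_reflTransGen u v).1 (hΓ u v) with
  | refl => rfl
  | tail _ hab ih => exact ih.trans (hf _ _ hab)

theorem stabilizer_eq_stabilizer_of_odd_of_tetravalent [Finite G] [IsPretransitive G V] [Finite V]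
    (hΓ : ∀ (g : G) u v, Γ.Adj (g • u) (g • v) ↔ Γ.Adj u v) (hconn : Γ.Preconnected)
    (hV : Odd (Nat.card V)) (hdeg : ∀ v, (Γ.neighborSet v).ncard = 4) (hG : Odd (Nat.card G))
    (u v : V) : stabilizer G u = stabilizer G v := by
  set R := Γ.equalStabilizerGraph G
  have hR : ∀ w, (R.neighborSet w).ncard = (R.neighborSet u).ncard :=
    fun w ↦ ncard_neighborSet_equalStabilizerGraph_eq hΓ w u
  have hR4 : ∀ w, (R.neighborSet w).ncard = 4 := by
    rcases ncard_neighborSet_equalStabilizerGraph_eq_one_or_four hG hΓ (hdeg u) with h1 | h4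
    · refine absurd (R.even_card_of_forall_odd_ncard_neighborSet fun w ↦ ?_)
        (Nat.not_even_iff_odd.2 hV)
      rw [hR w, h1]
      exact odd_one
    · exact fun w ↦ (hR w).trans h4
  refine hconn.eq_of_forall_adj (fun a b hab ↦ ?_) u v
  have hRΓ : R.neighborSet a = Γ.neighborSet a :=
    Set.eq_of_subset_of_ncard_le (fun _ h ↦ h.1) (by rw [hR4, hdeg]) (Set.toFinite _)
  exact (hRΓ.symm ▸ hab : b ∈ R.neighborSet a).2

end SimpleGraph

theorem odd_order_vertex_transitive_on_tetravalent_is_regular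
    {V : Type*} [Fintype V] (Γ : SimpleGraph V) [DecidableRel Γ.Adj]
    (hconn : Γ.Connected)
    (hodd : Odd (Fintype.card V))
    (hdeg : ∀ v : V, Γ.degree v = 4)
    (X : Subgroup (Equiv.Perm V))
    (haut : ∀ g ∈ X, ∀ u v : V, Γ.Adj (g u) (g v) ↔ Γ.Adj u v)
    (htrans : ∀ u v : V, ∃ g ∈ X, g u = v)
    (hXodd : Odd (Nat.card X)) :
    ∀ g ∈ X, ∀ v : V, g v = v → g = 1 := by
  intro g hg v hgv
  have : IsPretransitive X V := ⟨fun u v ↦ let ⟨g, hg, h⟩ := htrans u v; ⟨⟨g, hg⟩, h⟩⟩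
  have hdeg' : ∀ v, (Γ.neighborSet v).ncard = 4 := fun v ↦ by
    rw [← Nat.card_coe_set_eq, Nat.card_eq_fintype_card, SimpleGraph.card_neighborSet_eq_degree,
      hdeg]
  have hstab := Γ.stabilizer_eq_stabilizer_of_odd_of_tetravalent (G := X)
    (fun g ↦ haut g g.2) hconn.preconnected (by rwa [Nat.card_eq_fintype_card]) hdeg' hXodd v
  exact Equiv.ext fun w ↦ (hstab w ▸ hgv : (⟨g, hg⟩ : X) ∈ stabilizer X w)
end

section
/- Let G = ⟨a, b | a^m = b^n = 1, b⁻¹ab = a^r⟩ be a nonabelian group with gcd(m, n) = 1 and r^n ≡ 1 (mod m), and suppose gcd(r − 1, m) > 1 with p^α the largest power of a prime p dividing gcd(r − 1, m) and p^α dividing m. Then the subgroup ⟨a^{m/p^α}⟩ lies in the center of G and G decomposes as a nontrivial direct product. -/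
/-!
Since `p ∣ r - 1` and `p ∤ n`, the factor `x ^ (n - 1) + ⋯ + 1` of `x ^ n - 1` at `x = r` is prime
to `p`, so `r ^ n - 1` and `r - 1` have the same `p`-adic valuation. As `m ∣ r ^ n - 1`, the
maximality of `p ^ α` in `gcd (r - 1, m)` forces `p ^ α` to be exactly the `p`-part of `m`; write
`m = p ^ α * k` with `p ∤ k`. Conjugation by `b` raises `a ^ k` to the power `r`, and
`m ∣ (r - 1) * k`, so `a ^ k` is central, of order `p ^ α`. Since `⟨a⟩` is normal of index dividing
`n`, the index of `⟨a ^ k⟩` divides `k * n`, so `⟨a ^ k⟩` is a central Sylow `p`-subgroup.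
Burnside's normal `p`-complement theorem then gives a normal complement, which is nontrivial
because `G` is not abelian.
-/

theorem pow_dvd_pow_sub_one_iff_of_prime {R : Type*} [CommRing R] [IsDomain R] {p : R}
    (hp : Prime p) {x : R} (hx : p ∣ x - 1) {n : ℕ} (hn : ¬ p ∣ (n : R)) (j : ℕ) :
    p ^ j ∣ x ^ n - 1 ↔ p ^ j ∣ x - 1 := by
  have hpx : ¬ p ∣ x := fun h => hp.not_dvd_one (by simpa using dvd_sub h hx)
  have hval := emultiplicity_pow_sub_pow_of_prime hp hx hpx hn
  rw [one_pow] at hval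
  rw [pow_dvd_iff_le_emultiplicity, pow_dvd_iff_le_emultiplicity, hval]

theorem Nat.prime_pow_dvd_sub_one_of_pow_modEq_one {p n r m j : ℕ} (hp : p.Prime)
    (hpr : p ∣ r - 1) (hpn : ¬ p ∣ n) (hrn : r ^ n ≡ 1 [MOD m]) (hj : p ^ j ∣ m) :
    p ^ j ∣ r - 1 := by
  rcases Nat.eq_zero_or_pos r with rfl | hr
  · simp
  have hpZ : _root_.Prime (p : ℤ) := Nat.prime_iff_prime_int.mp hp
  have hm : (m : ℤ) ∣ (r : ℤ) ^ n - 1 := by exact_mod_cast Nat.modEq_iff_dvd.mp hrn.symm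
  rw [← Int.natCast_dvd_natCast, Nat.cast_pred hr] at hpr ⊢
  push_cast at hj ⊢
  exact (pow_dvd_pow_sub_one_iff_of_prime hpZ hpr (by exact_mod_cast hpn) j).mp
    ((Int.natCast_dvd_natCast.mpr hj).trans hm)

theorem Nat.mul_modEq_self_of_dvd_sub_one {d r k : ℕ} (hr : r ≠ 0) (h : d ∣ r - 1) :
    r * k ≡ k [MOD d * k] := by
  refine ((Nat.modEq_iff_dvd' (Nat.le_mul_of_pos_left k (Nat.pos_of_ne_zero hr))).mpr ?_).symm
  rw [← Nat.sub_one_mul]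
  exact Nat.mul_dvd_mul_right h k

namespace Subgroup

variable {G : Type*} [Group G]

theorem mem_center_of_closure_eq_top {s : Set G} (hs : closure s = ⊤) {z : G}
    (hz : ∀ g ∈ s, Commute g z) : z ∈ center G := by
  rw [← centralizer_univ, ← coe_top, ← hs, centralizer_closure]
  exact mem_centralizer_iff.mpr hz

theorem pow_mem_center_of_inv_mul_mul_eq_pow {a b : G} {r k : ℕ}
    (hgen : closure ({a, b} : Set G) = ⊤) (h : b⁻¹ * a * b = a ^ r)
    (hk : r * k ≡ k [MOD orderOf a]) : a ^ k ∈ center G := by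
  have hconj : (b⁻¹ * a * b) ^ k = b⁻¹ * a ^ k * b := by
    simpa using conj_pow (a := b⁻¹) (b := a) (i := k)
  rw [h, ← pow_mul, pow_eq_pow_iff_modEq.mpr hk] at hconj
  have hb : Commute b (a ^ k) := by
    change b * a ^ k = a ^ k * b
    nth_rewrite 1 [hconj]
    group
  exact mem_center_of_closure_eq_top hgen (by simpa using hb)

theorem normal_of_le_center {H : Subgroup G} (hH : H ≤ center G) : H.Normal :=
  ⟨fun h hh g => by rwa [mem_center_iff.mp (hH hh) g, mul_inv_cancel_right]⟩

theorem zpowers_normal_of_inv_mul_mul_mem [Finite G] {a b : G}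
    (hgen : closure ({a, b} : Set G) = ⊤) (hab : b⁻¹ * a * b ∈ zpowers a) :
    (zpowers a).Normal := by
  rw [← normalizer_eq_top_iff, eq_top_iff, ← hgen, closure_le, Set.insert_subset_iff,
    Set.singleton_subset_iff]
  refine ⟨le_normalizer (mem_zpowers a), ?_⟩
  -- in a finite group, mapping `⟨a⟩` into itself by conjugation already means normalizing it
  suffices b⁻¹ ∈ normalizer (zpowers a : Set G) from inv_inv b ▸ inv_mem this
  refine mem_normalizer_fintype fun g hg => ?_
  obtain ⟨j, rfl⟩ := mem_zpowers_iff.mp hg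
  rw [← conj_zpow, inv_inv]
  exact zpow_mem hab j

theorem index_zpowers_dvd_orderOf {a b : G} [(zpowers a).Normal]
    (hgen : closure ({a, b} : Set G) = ⊤) : (zpowers a).index ∣ orderOf b := by
  have hsup : zpowers b ⊔ zpowers a = ⊤ := by
    rw [eq_top_iff, ← hgen, closure_le, Set.insert_subset_iff, Set.singleton_subset_iff]
    exact ⟨mem_sup_right (mem_zpowers a), mem_sup_left (mem_zpowers b)⟩
  rw [← relIndex_top_right, ← hsup, relIndex_sup_right, ← Nat.card_zpowers]
  exact relIndex_dvd_card (zpowers a) (zpowers b)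

theorem index_zpowers_pow [Finite G] {a : G} {k : ℕ} (hk : k ∣ orderOf a) :
    (zpowers (a ^ k)).index = k * (zpowers a).index := by
  have hk0 : 0 < k := Nat.pos_of_dvd_of_pos hk (orderOf_pos a)
  have hq : 0 < orderOf a / k := Nat.div_pos (Nat.le_of_dvd (orderOf_pos a) hk) hk0
  refine Nat.eq_of_mul_eq_mul_left hq ?_
  calc orderOf a / k * (zpowers (a ^ k)).index = Nat.card G := by
        rw [← orderOf_pow_of_dvd hk0.ne' hk, ← Nat.card_zpowers, card_mul_index]
    _ = orderOf a / k * (k * (zpowers a).index) := by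
        rw [← mul_assoc, Nat.div_mul_cancel hk, ← Nat.card_zpowers, card_mul_index]

theorem not_dvd_index_zpowers_pow [Finite G] {a b : G} (hgen : closure ({a, b} : Set G) = ⊤)
    (hab : b⁻¹ * a * b ∈ zpowers a) {p k : ℕ} (hp : p.Prime) (hka : k ∣ orderOf a)
    (hpk : ¬ p ∣ k) (hpb : ¬ p ∣ orderOf b) : ¬ p ∣ (zpowers (a ^ k)).index := by
  have := zpowers_normal_of_inv_mul_mul_mem hgen hab
  rw [index_zpowers_pow hka, hp.dvd_mul, not_or]
  exact ⟨hpk, fun h => hpb (h.trans (index_zpowers_dvd_orderOf hgen))⟩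

theorem exists_normal_isComplement'_of_le_center [Finite G] {p : ℕ} [Fact p.Prime]
    {H : Subgroup G} (hH : IsPGroup p H) (hidx : ¬ p ∣ H.index) (hc : H ≤ center G) :
    ∃ K : Subgroup G, K.Normal ∧ IsComplement' H K := by
  let P := hH.toSylow hidx
  have hP : normalizer (P : Set G) ≤ centralizer (P : Set G) := by
    rw [centralizer_eq_top_iff_subset.mpr (show (P : Set G) ⊆ center G from hc)]
    exact le_top
  exact ⟨_, (MonoidHom.transferSylow P hP).normal_ker,
    by simpa [P] using (MonoidHom.ker_transferSylow_isComplement' P hP).symm⟩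

theorem IsComplement'.ne_bot_of_le_center {H K : Subgroup G} (hHK : IsComplement' H K)
    (hc : H ≤ center G) (hG : ∃ x y : G, x * y ≠ y * x) : K ≠ ⊥ := by
  rintro rfl
  obtain ⟨x, y, hxy⟩ := hG
  exact hxy (mem_center_iff.mp (hc (isComplement'_bot_right.mp hHK ▸ mem_top y)) x)

end Subgroup

open Subgroup

theorem central_subgroup_and_decomposition_of_gcd_gt_one_general
    {G : Type*} [Group G] [Finite G] (a b : G) (m n r p α : ℕ)
    (hm : orderOf a = m) (hn : orderOf b = n)
    (hgen : Subgroup.closure ({a, b} : Set G) = ⊤)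
    (hconj : b⁻¹ * a * b = a ^ r)
    (hcop : Nat.Coprime m n)
    (hrn : r ^ n ≡ 1 [MOD m])
    (hnonab : ∃ x y : G, x * y ≠ y * x)
    (hp : p.Prime)
    (hpdvd : p ∣ Nat.gcd (r - 1) m)
    (hpα : p ^ α ∣ Nat.gcd (r - 1) m)
    (hpαmax : ¬ p ^ (α + 1) ∣ Nat.gcd (r - 1) m)
    (hpαm : p ^ α ∣ m) :
    Subgroup.zpowers (a ^ (m / p ^ α)) ≤ Subgroup.center G ∧
      ∃ H K : Subgroup G, H ≠ ⊥ ∧ K ≠ ⊥ ∧ H.Normal ∧ K.Normal ∧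
        H ⊓ K = ⊥ ∧ H ⊔ K = ⊤ := by
  have hpm : p ∣ m := hpdvd.trans (Nat.gcd_dvd_right _ _)
  have hpn : ¬ p ∣ n := fun h => hp.one_lt.ne' (Nat.eq_one_of_dvd_coprimes hcop hpm h)
  have hα : α ≠ 0 := by
    rintro rfl
    exact hpαmax (by simpa using hpdvd)
  have hm_max : ¬ p ^ (α + 1) ∣ m := fun h => hpαmax <| Nat.dvd_gcd
    (Nat.prime_pow_dvd_sub_one_of_pow_modEq_one hp (hpdvd.trans (Nat.gcd_dvd_left _ _)) hpn hrn h) h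
  have hr : r ≠ 0 := by
    rintro rfl
    have ha : a = 1 := by simpa [mul_assoc, inv_mul_eq_one] using hconj
    exact hp.not_dvd_one (by simpa [← hm, ha] using hpm)
  obtain ⟨k, rfl⟩ := hpαm
  rw [Nat.mul_div_cancel_left k (pow_pos hp.pos α)]
  have hpk : ¬ p ∣ k := fun h => hm_max (pow_succ p α ▸ mul_dvd_mul_left _ h)
  have hka : k ∣ orderOf a := hm ▸ Dvd.intro_left _ rfl
  have hk0 : 0 < k := Nat.pos_of_dvd_of_pos hka (orderOf_pos a)
  have hHc : zpowers (a ^ k) ≤ center G := zpowers_le.mpr <| pow_mem_center_of_inv_mul_mul_eq_pow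
    hgen hconj (hm ▸ Nat.mul_modEq_self_of_dvd_sub_one hr (hpα.trans (Nat.gcd_dvd_left _ _)))
  have hcardH : Nat.card (zpowers (a ^ k)) = p ^ α := by
    rw [Nat.card_zpowers, orderOf_pow_of_dvd hk0.ne' hka, hm, Nat.mul_div_cancel _ hk0]
  have hidx : ¬ p ∣ (zpowers (a ^ k)).index := not_dvd_index_zpowers_pow hgen
    (hconj ▸ pow_mem (mem_zpowers a) r) hp hka hpk (hn ▸ hpn)
  have := Fact.mk hp
  obtain ⟨K, hKn, hHK⟩ := exists_normal_isComplement'_of_le_center (.of_card hcardH) hidx hHc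
  refine ⟨hHc, _, K, ?_, hHK.ne_bot_of_le_center hHc hnonab, normal_of_le_center hHc, hKn,
    hHK.disjoint.eq_bot, hHK.sup_eq_top⟩
  intro h
  rw [h, card_bot] at hcardH
  exact (Nat.one_lt_pow hα hp.one_lt).ne hcardH

theorem central_subgroup_and_decomposition_of_gcd_gt_one
    {G : Type*} [Group G] [Finite G] (a b : G) (m n r p α : ℕ)
    (hm : orderOf a = m) (hn : orderOf b = n)
    (hgen : Subgroup.closure ({a, b} : Set G) = ⊤)
    (hconj : b⁻¹ * a * b = a ^ r)
    (hcop : Nat.Coprime m n)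
    (hrn : r ^ n ≡ 1 [MOD m])
    (hnonab : ∃ x y : G, x * y ≠ y * x)
    (hgcd : 1 < Nat.gcd (r - 1) m)
    (hp : p.Prime)
    (hpdvd : p ∣ Nat.gcd (r - 1) m)
    (hpα : p ^ α ∣ Nat.gcd (r - 1) m)
    (hpαmax : ¬ p ^ (α + 1) ∣ Nat.gcd (r - 1) m)
    (hpαm : p ^ α ∣ m) :
    Subgroup.zpowers (a ^ (m / p ^ α)) ≤ Subgroup.center G ∧
      ∃ H K : Subgroup G, H ≠ ⊥ ∧ K ≠ ⊥ ∧ H.Normal ∧ K.Normal ∧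
        H ⊓ K = ⊥ ∧ H ⊔ K = ⊤ :=
  central_subgroup_and_decomposition_of_gcd_gt_one_general a b m n r p α hm hn hgen hconj hcop hrn
    hnonab hp hpdvd hpα hpαmax hpαm
end

section
/- Let G = ⟨a, b | a^m = b^n = 1, b⁻¹ab = a^r⟩ be nonabelian with gcd(m,n) = 1 (m, n odd), r^n ≡ 1 (mod m), and suppose G is not the direct product of two nontrivial subgroups. Then gcd(r − 1, m) = 1, the intersection ⟨a⟩ ∩ Z(G) is trivial, and for every integer i and every j with gcd(j, n) = 1, the element a^i b^j has order exactly n. -/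
/-!
Write `A = ⟨a⟩`, on which conjugation by `b` acts as `x ↦ x ^ r`, and `S = 1 + r + ⋯ + r ^ (n - 1)`.
Since `b ^ n = 1`, every `x ∈ A` satisfies `x ^ (S * (r - 1)) = 1`; and `S ≡ n [MOD r - 1]`, so
`gcd (r - 1) S` is prime to `m`. Hence `a` is a product of powers of the central element `a ^ S`
and of `a ^ (r - 1)`, and `G` is the direct product of `A ∩ Z(G)` and the normal subgroup
`⟨a ^ (r - 1), b⟩`, which meet trivially. Indecomposability forces `A ∩ Z(G) = 1`, so `a ^ S = 1`,
whence `gcd (r - 1) m = 1`. For `x = a ^ i * b ^ j`, the image of `x` in `G ⧸ A` has order `n`, and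
`x ^ n ∈ A` commutes with `x` and `a ^ i`, hence with `b ^ j` and so with `b`: it is central, so
trivial.
-/

open Subgroup Finset

namespace Subgroup

variable {G : Type*} [Group G]

theorem normal_closure_of_conj_generators [Finite G] {s t : Set G} (hs : closure s = ⊤)
    (h : ∀ g ∈ s, ∀ x ∈ t, g⁻¹ * x * g ∈ closure t) : (closure t).Normal := by
  rw [← normalizer_eq_top_iff, eq_top_iff, ← hs, closure_le]
  intro g hg
  have hconj : closure t ≤ (closure t).comap (MulAut.conj g⁻¹).toMonoidHom :=
    (closure_le _).mpr fun x hx => by simpa using h g hg x hx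
  rw [← inv_inv g]
  exact inv_mem (mem_normalizer_fintype fun x hx => by simpa using hconj hx)

theorem mem_center_iff_of_closure_eq_top {s : Set G} (hs : closure s = ⊤) {x : G} :
    x ∈ center G ↔ ∀ g ∈ s, Commute g x := by
  rw [← centralizer_univ, ← coe_top, ← hs, centralizer_closure, mem_centralizer_iff]
  rfl

theorem pow_gcd_mem {H : Subgroup G} {x : G} {k l : ℕ} (hk : x ^ k ∈ H) (hl : x ^ l ∈ H) :
    x ^ k.gcd l ∈ H := by
  rw [← zpow_natCast, Nat.gcd_eq_gcd_ab, zpow_add, zpow_mul, zpow_mul, zpow_natCast, zpow_natCast]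
  exact H.mul_mem (H.zpow_mem hk _) (H.zpow_mem hl _)

theorem zpowers_inf_zpowers_eq_bot {x y : G} (h : (orderOf x).Coprime (orderOf y)) :
    zpowers x ⊓ zpowers y = ⊥ :=
  disjoint_iff.mp (disjoint_of_coprime_natCard (by rwa [Nat.card_zpowers, Nat.card_zpowers]))

end Subgroup

theorem QuotientGroup.orderOf_mk_of_inf_zpowers_eq_bot {G : Type*} [Group G] {N : Subgroup G}
    [N.Normal] {g : G} (h : N ⊓ zpowers g = ⊥) : orderOf (g : G ⧸ N) = orderOf g := by
  refine orderOf_eq_orderOf_iff.mpr fun k => ?_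
  rw [← QuotientGroup.mk_pow, QuotientGroup.eq_one_iff]
  exact ⟨fun hk => mem_bot.mp (h ▸ mem_inf.mpr ⟨hk, pow_mem (mem_zpowers g) k⟩),
    fun hk => hk ▸ one_mem N⟩

theorem Nat.Coprime.gcd_sub_one_geom_sum {m n r : ℕ} (h : m.Coprime n) (hr : 0 < r) :
    ((r - 1).gcd (∑ i ∈ range n, r ^ i)).Coprime m := by
  have hmod : ∑ i ∈ range n, r ^ i ≡ n [MOD r - 1] := by
    simpa using Nat.ModEq.sum (s := range n) fun i _ => (Nat.modEq_sub hr).pow i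
  refine Nat.Coprime.coprime_dvd_left ?_ h.symm
  rw [Nat.gcd_comm, hmod.gcd_eq]
  exact Nat.gcd_dvd_left n (r - 1)

theorem pow_geom_sum_mul_sub_one_eq_one {G : Type*} [Group G] {x : G} {r n : ℕ} (hr : 0 < r)
    (hx : x ^ r ^ n = x) : x ^ ((∑ i ∈ range n, r ^ i) * (r - 1)) = 1 := by
  have key := geom_sum_mul_add (r - 1) n
  rw [Nat.sub_one_add_one hr.ne'] at key
  exact mul_eq_right.mp (by rw [← pow_succ, key, hx])

section Presentation

variable {G : Type*} [Group G] {a b : G} {r : ℕ}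

theorem conj_eq_pow_of_mem_zpowers (hconj : b⁻¹ * a * b = a ^ r) {x : G} (hx : x ∈ zpowers a) :
    b⁻¹ * x * b = x ^ r := by
  obtain ⟨k, rfl⟩ := mem_zpowers_iff.mp hx
  calc b⁻¹ * a ^ k * b = (b⁻¹ * a * b) ^ k := by simpa using (conj_zpow (a := b⁻¹)).symm
    _ = (a ^ k) ^ r := by rw [hconj, ← zpow_natCast, ← zpow_mul, mul_comm, zpow_mul, zpow_natCast]

theorem conj_pow_eq_pow_pow_of_mem_zpowers (hconj : b⁻¹ * a * b = a ^ r) {x : G}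
    (hx : x ∈ zpowers a) (k : ℕ) : (b ^ k)⁻¹ * x * b ^ k = x ^ r ^ k := by
  induction k with
  | zero => simp
  | succ k ih =>
    calc (b ^ (k + 1))⁻¹ * x * b ^ (k + 1) = b⁻¹ * ((b ^ k)⁻¹ * x * b ^ k) * b := by group
      _ = x ^ r ^ (k + 1) := by
        rw [ih, conj_eq_pow_of_mem_zpowers hconj (pow_mem hx _), ← pow_mul, pow_succ]

theorem pow_pow_orderOf_eq_self (hconj : b⁻¹ * a * b = a ^ r) {x : G} (hx : x ∈ zpowers a) :
    x ^ r ^ orderOf b = x := by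
  simpa using (conj_pow_eq_pow_pow_of_mem_zpowers hconj hx (orderOf b)).symm

theorem zpowers_normal_of_mem_zpowers [Finite G] (hgen : closure {a, b} = ⊤)
    (hconj : b⁻¹ * a * b = a ^ r) {x : G} (hx : x ∈ zpowers a) : (zpowers x).Normal := by
  rw [zpowers_eq_closure]
  refine normal_closure_of_conj_generators hgen ?_
  simp only [Set.mem_insert_iff, Set.mem_singleton_iff, forall_eq_or_imp, forall_eq]
  refine ⟨?_, ?_⟩
  · obtain ⟨k, rfl⟩ := mem_zpowers_iff.mp hx
    rw [show a⁻¹ * a ^ k * a = a ^ k by group]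
    exact subset_closure (Set.mem_singleton _)
  · rw [conj_eq_pow_of_mem_zpowers hconj hx]
    exact pow_mem (subset_closure (Set.mem_singleton x)) r

theorem mem_center_iff_pow_eq_self (hgen : closure {a, b} = ⊤) (hconj : b⁻¹ * a * b = a ^ r)
    {x : G} (hx : x ∈ zpowers a) : x ∈ center G ↔ x ^ r = x := by
  obtain ⟨k, rfl⟩ := mem_zpowers_iff.mp hx
  rw [mem_center_iff_of_closure_eq_top hgen, ← conj_eq_pow_of_mem_zpowers hconj hx]
  simp only [Set.mem_insert_iff, Set.mem_singleton_iff, forall_eq_or_imp, forall_eq,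
    (Commute.refl a).zpow_right k, true_and, mul_assoc, inv_mul_eq_iff_eq_mul]
  exact eq_comm

theorem pow_geom_sum_mem_center (hgen : closure {a, b} = ⊤) (hconj : b⁻¹ * a * b = a ^ r)
    (hr : 0 < r) : a ^ (∑ i ∈ range (orderOf b), r ^ i) ∈ center G := by
  set S := ∑ i ∈ range (orderOf b), r ^ i
  have h : a ^ (S * (r - 1)) = 1 :=
    pow_geom_sum_mul_sub_one_eq_one hr (pow_pow_orderOf_eq_self hconj (mem_zpowers a))
  rw [mem_center_iff_pow_eq_self hgen hconj (pow_mem (mem_zpowers a) S), ← pow_mul,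
    ← Nat.sub_one_add_one hr.ne', mul_add_one, pow_add, h, one_mul]

theorem closure_pow_sub_one_normal [Finite G] (hgen : closure {a, b} = ⊤)
    (hconj : b⁻¹ * a * b = a ^ r) (hr : 0 < r) : (closure {a ^ (r - 1), b}).Normal := by
  refine normal_closure_of_conj_generators hgen ?_
  have ha : a ^ (r - 1) ∈ closure {a ^ (r - 1), b} := subset_closure (Set.mem_insert _ _)
  have hb : b ∈ closure {a ^ (r - 1), b} := subset_closure (Set.mem_insert_of_mem _ rfl)
  simp only [Set.mem_insert_iff, Set.mem_singleton_iff, forall_eq_or_imp, forall_eq]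
  refine ⟨⟨?_, ?_⟩, ?_, ?_⟩
  · rwa [show a⁻¹ * a ^ (r - 1) * a = a ^ (r - 1) by group]
  · have : a ^ (r - 1) = a⁻¹ * (b⁻¹ * a * b) := by
      rw [hconj, ← mul_pow_sub_one hr.ne', inv_mul_cancel_left]
    rw [show a⁻¹ * b * a = b * (a ^ (r - 1))⁻¹ by rw [this]; group]
    exact mul_mem hb (inv_mem ha)
  · rw [conj_eq_pow_of_mem_zpowers hconj (pow_mem (mem_zpowers a) _)]
    exact pow_mem ha r
  · rwa [inv_mul_cancel, one_mul]

theorem commute_of_closure_pair_eq_top (hgen : closure {a, b} = ⊤) (hab : Commute a b)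
    (x y : G) : Commute x y := by
  have hcenter : center G = ⊤ := by
    rw [eq_top_iff, ← hgen, closure_le]
    simp only [Set.insert_subset_iff, Set.singleton_subset_iff, SetLike.mem_coe,
      mem_center_iff_of_closure_eq_top hgen, Set.mem_insert_iff, Set.mem_singleton_iff,
      forall_eq_or_imp, forall_eq]
    exact ⟨⟨Commute.refl a, hab.symm⟩, hab, Commute.refl b⟩
  exact (mem_center_iff.mp (hcenter ▸ mem_top y) x)

theorem zpowers_inf_center_inf_closure_eq_bot [Finite G] (hgen : closure {a, b} = ⊤)
    (hconj : b⁻¹ * a * b = a ^ r) (hcop : (orderOf a).Coprime (orderOf b)) (hr : 0 < r) :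
    zpowers a ⊓ center G ⊓ closure {a ^ (r - 1), b} = ⊥ := by
  have hK : closure {a ^ (r - 1), b} = zpowers (a ^ (r - 1)) ⊔ zpowers b := by
    rw [zpowers_eq_closure, zpowers_eq_closure, ← Subgroup.closure_union]
    rfl
  have := zpowers_normal_of_mem_zpowers hgen hconj (pow_mem (mem_zpowers a) (r - 1))
  rw [eq_bot_iff]
  intro x hx
  obtain ⟨⟨hxa, hxc⟩, hxK⟩ := mem_inf.mp hx
  rw [← SetLike.mem_coe, hK, normal_mul] at hxK
  obtain ⟨y, hy, z, hz, rfl⟩ := hxK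
  have hya : y ∈ zpowers a := zpowers_le.mpr (pow_mem (mem_zpowers a) _) hy
  obtain rfl : z = 1 := by
    have hza : z ∈ zpowers a := by simpa using mul_mem (inv_mem hya) hxa
    simpa [zpowers_inf_zpowers_eq_bot hcop] using mem_inf.mpr ⟨hza, hz⟩
  simp only [mul_one] at hxa hxc ⊢
  have hyr : y ^ r = y := (mem_center_iff_pow_eq_self hgen hconj hya).mp hxc
  have hdvd_sub : orderOf y ∣ r - 1 :=
    orderOf_dvd_of_pow_eq_one (mul_eq_right.mp (by rw [pow_sub_one_mul hr.ne', hyr]))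
  have hdvd_sum : orderOf y ∣ ∑ i ∈ range (orderOf b), r ^ i := by
    refine (orderOf_dvd_of_mem_zpowers hy).trans (orderOf_dvd_of_pow_eq_one ?_)
    rw [← pow_mul, mul_comm]
    exact pow_geom_sum_mul_sub_one_eq_one hr (pow_pow_orderOf_eq_self hconj (mem_zpowers a))
  exact orderOf_eq_one_iff.mp (Nat.eq_one_of_dvd_coprimes (hcop.gcd_sub_one_geom_sum hr)
    (Nat.dvd_gcd hdvd_sub hdvd_sum) (orderOf_dvd_of_mem_zpowers hya))

theorem zpowers_inf_center_sup_closure_eq_top (hgen : closure {a, b} = ⊤)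
    (hconj : b⁻¹ * a * b = a ^ r) (hcop : (orderOf a).Coprime (orderOf b)) (hr : 0 < r) :
    zpowers a ⊓ center G ⊔ closure {a ^ (r - 1), b} = ⊤ := by
  set H := zpowers a ⊓ center G ⊔ closure {a ^ (r - 1), b}
  have hb : b ∈ H := mem_sup_right (subset_closure (Set.mem_insert_of_mem _ rfl))
  have ha : a ∈ H := by
    have hsub : a ^ (r - 1) ∈ H := mem_sup_right (subset_closure (Set.mem_insert _ _))
    have hsum : a ^ (∑ i ∈ range (orderOf b), r ^ i) ∈ H :=
      mem_sup_left ⟨pow_mem (mem_zpowers a) _, pow_geom_sum_mem_center hgen hconj hr⟩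
    exact zpowers_le.mpr (pow_gcd_mem hsub hsum)
      (mem_zpowers_pow_iff.mpr (hcop.gcd_sub_one_geom_sum hr))
  rw [eq_top_iff, ← hgen, closure_le, Set.insert_subset_iff, Set.singleton_subset_iff]
  exact ⟨ha, hb⟩

theorem gcd_sub_one_orderOf_eq_one (hgen : closure {a, b} = ⊤) (hconj : b⁻¹ * a * b = a ^ r)
    (hcop : (orderOf a).Coprime (orderOf b)) (hr : 0 < r) (hZ : zpowers a ⊓ center G = ⊥) :
    (r - 1).gcd (orderOf a) = 1 := by
  have hsum : a ^ (∑ i ∈ range (orderOf b), r ^ i) = 1 :=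
    mem_bot.mp (hZ ▸ mem_inf.mpr ⟨pow_mem (mem_zpowers a) _, pow_geom_sum_mem_center hgen hconj hr⟩)
  exact Nat.eq_one_of_dvd_coprimes (hcop.gcd_sub_one_geom_sum hr)
    (Nat.gcd_dvd_gcd_of_dvd_right _ (orderOf_dvd_of_pow_eq_one hsum)) (Nat.gcd_dvd_right _ _)

theorem orderOf_pow_mul_pow [Finite G] (hgen : closure {a, b} = ⊤)
    (hconj : b⁻¹ * a * b = a ^ r) (hcop : (orderOf a).Coprime (orderOf b))
    (hZ : zpowers a ⊓ center G = ⊥) (i : ℕ) {j : ℕ} (hj : j.Coprime (orderOf b)) :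
    orderOf (a ^ i * b ^ j) = orderOf b := by
  have := zpowers_normal_of_mem_zpowers hgen hconj (mem_zpowers a)
  set x := a ^ i * b ^ j
  have hb : orderOf (b : G ⧸ zpowers a) = orderOf b :=
    QuotientGroup.orderOf_mk_of_inf_zpowers_eq_bot (zpowers_inf_zpowers_eq_bot hcop)
  have hx : orderOf (x : G ⧸ zpowers a) = orderOf b := by
    have : (x : G ⧸ zpowers a) = (b : G ⧸ zpowers a) ^ j := by
      rw [QuotientGroup.mk_mul, (QuotientGroup.eq_one_iff _).mpr (pow_mem (mem_zpowers a) i),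
        one_mul, QuotientGroup.mk_pow]
    rw [this, Nat.Coprime.orderOf_pow (hb ▸ hj.symm), hb]
  have hxn : x ^ orderOf b = 1 := by
    have hmem : x ^ orderOf b ∈ zpowers a := by
      rw [← QuotientGroup.eq_one_iff, QuotientGroup.mk_pow, ← hx, pow_orderOf_eq_one]
    obtain ⟨k, hk⟩ := mem_zpowers_iff.mp hmem
    have hai : Commute (a ^ i) (x ^ orderOf b) := hk ▸ ((Commute.refl a).pow_left i).zpow_right k
    have hbj : Commute (b ^ j) (x ^ orderOf b) := by
      simpa [x] using hai.inv_left.mul_left (Commute.self_pow x _)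
    refine mem_bot.mp (hZ ▸ mem_inf.mpr ⟨hmem, (mem_center_iff_of_closure_eq_top hgen).mpr ?_⟩)
    simp only [Set.mem_insert_iff, Set.mem_singleton_iff, forall_eq_or_imp, forall_eq]
    obtain ⟨l, hl⟩ := mem_zpowers_iff.mp (mem_zpowers_pow_iff.mpr hj)
    exact ⟨hk ▸ (Commute.refl a).zpow_right k, by simpa only [hl] using hbj.zpow_left l⟩
  exact Nat.dvd_antisymm (orderOf_dvd_of_pow_eq_one hxn)
    (hx ▸ orderOf_map_dvd (QuotientGroup.mk' _) x)

end Presentation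

theorem order_of_elements_in_indecomposable_sylow_cyclic_general
    {G : Type*} [Group G] [Finite G] (a b : G) (m n r : ℕ)
    (hm : orderOf a = m) (hn : orderOf b = n)
    (hgen : Subgroup.closure ({a, b} : Set G) = ⊤)
    (hconj : b⁻¹ * a * b = a ^ r)
    (hcop : Nat.Coprime m n)
    (hnonab : ∃ x y : G, x * y ≠ y * x)
    (hindec : ¬ ∃ H K : Subgroup G, H ≠ ⊥ ∧ K ≠ ⊥ ∧ H.Normal ∧ K.Normal ∧
        H ⊓ K = ⊥ ∧ H ⊔ K = ⊤) :
    Nat.gcd (r - 1) m = 1 ∧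
    Subgroup.zpowers a ⊓ Subgroup.center G = ⊥ ∧
    ∀ i j : ℕ, Nat.Coprime j n → orderOf (a ^ i * b ^ j) = n := by
  subst hm hn
  obtain ⟨x, y, hxy⟩ := hnonab
  have hab : ¬ Commute a b := fun h => hxy (commute_of_closure_pair_eq_top hgen h x y)
  have hb : b ≠ 1 := fun hb => hab (hb ▸ Commute.one_right a)
  have hr : 0 < r := by
    refine Nat.pos_of_ne_zero fun hr => hab ?_
    rw [hr, pow_zero, mul_eq_one_iff_eq_inv, mul_eq_left] at hconj
    subst hconj
    exact Commute.one_left b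
  have hZ : zpowers a ⊓ center G = ⊥ := by
    by_contra hZ
    have := zpowers_normal_of_mem_zpowers hgen hconj (mem_zpowers a)
    refine hindec ⟨_, _, hZ, fun hK => hb ?_, inferInstance,
      closure_pow_sub_one_normal hgen hconj hr,
      zpowers_inf_center_inf_closure_eq_bot hgen hconj hcop hr,
      zpowers_inf_center_sup_closure_eq_top hgen hconj hcop hr⟩
    exact mem_bot.mp (hK ▸ subset_closure (Set.mem_insert_of_mem _ rfl))
  exact ⟨gcd_sub_one_orderOf_eq_one hgen hconj hcop hr hZ, hZ,
    fun i j hj => orderOf_pow_mul_pow hgen hconj hcop hZ i hj⟩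

theorem order_of_elements_in_indecomposable_sylow_cyclic
    {G : Type*} [Group G] [Finite G] (a b : G) (m n r : ℕ)
    (hm : orderOf a = m) (hn : orderOf b = n)
    (hmodd : Odd m) (hnodd : Odd n)
    (hgen : Subgroup.closure ({a, b} : Set G) = ⊤)
    (hconj : b⁻¹ * a * b = a ^ r)
    (hcop : Nat.Coprime m n)
    (hrn : r ^ n ≡ 1 [MOD m])
    (hnonab : ∃ x y : G, x * y ≠ y * x)
    (hindec : ¬ ∃ H K : Subgroup G, H ≠ ⊥ ∧ K ≠ ⊥ ∧ H.Normal ∧ K.Normal ∧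
        H ⊓ K = ⊥ ∧ H ⊔ K = ⊤) :
    Nat.gcd (r - 1) m = 1 ∧
    Subgroup.zpowers a ⊓ Subgroup.center G = ⊥ ∧
    ∀ i j : ℕ, Nat.Coprime j n → orderOf (a ^ i * b ^ j) = n :=
  order_of_elements_in_indecomposable_sylow_cyclic_general a b m n r hm hn hgen hconj hcop hnonab
    hindec
end

section
/- Let G = ⟨a, b | a^m = b^n = 1, b⁻¹ab = a^r⟩ with r ≢ 1 (mod m), r^n ≡ 1 (mod m), gcd(m, n) = 1, ⟨a⟩ characteristic in G, and let n₀ be the smallest positive integer with r^{n₀} ≡ 1 (mod m). If σ is an automorphism of G, then σ(a) = a^s for some s coprime to m, and σ(b) = a^t b^{1 + l·n₀} for some integers t and 0 ≤ l < n/n₀. -/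
open Pointwise

theorem automorphism_form_of_metacyclic
    {G : Type*} [Group G] [Finite G] (a b : G) (m n r n₀ : ℕ)
    (hm : orderOf a = m) (hn : orderOf b = n)
    (hgen : Subgroup.closure ({a, b} : Set G) = ⊤)
    (hconj : b⁻¹ * a * b = a ^ r)
    (hcop : Nat.Coprime m n)
    (hr1 : ¬ r ≡ 1 [MOD m])
    (hrn : r ^ n ≡ 1 [MOD m])
    (hchar : (Subgroup.zpowers a).Characteristic)
    (hn₀pos : 0 < n₀) (hn₀ : r ^ n₀ ≡ 1 [MOD m])
    (hn₀min : ∀ k : ℕ, 0 < k → r ^ k ≡ 1 [MOD m] → n₀ ≤ k) :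
    ∀ σ : MulAut G,
      (∃ s : ℕ, Nat.Coprime s m ∧ σ a = a ^ s) ∧
      (∃ t l : ℕ, l < n / n₀ ∧ σ b = a ^ t * b ^ (1 + l * n₀)) := by
  intro σ
  haveI := hchar
  have hm0 : 0 < m := hm ▸ orderOf_pos a
  have hn0 : 0 < n := hn ▸ orderOf_pos b
  -- reduce an integer power to a natural power
  have zred : ∀ (x : G) (M : ℕ) (z : ℤ), orderOf x = M → 0 < M →
      ∃ c : ℕ, c < M ∧ x ^ z = x ^ c := by
    intro x M z hM hMpos
    refine ⟨(z % (M : ℤ)).toNat, ?_, ?_⟩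
    · have h1 : z % (M : ℤ) < M := Int.emod_lt_of_pos z (by exact_mod_cast hMpos)
      omega
    · have hnn : 0 ≤ z % (M : ℤ) := Int.emod_nonneg z (by exact_mod_cast hMpos.ne')
      rw [← zpow_natCast, Int.toNat_of_nonneg hnn, ← hM, zpow_mod_orderOf]
  -- part 1 : σ a = a ^ s
  have hfix := Subgroup.characteristic_iff_comap_eq.mp hchar σ
  have hmem : σ a ∈ Subgroup.zpowers a := by
    have : a ∈ (Subgroup.zpowers a).comap σ.toMonoidHom := by
      rw [hfix]; exact Subgroup.mem_zpowers a
    exact this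
  obtain ⟨z, hz⟩ := hmem
  have hz' : a ^ z = σ a := hz
  obtain ⟨s, hslt, hseq⟩ := zred a m z hm hm0
  have hσa : σ a = a ^ s := by rw [← hz', hseq]
  have hords : orderOf (σ a) = m := by
    rw [← hm]
    exact orderOf_injective σ.toMonoidHom σ.injective a
  have hs : Nat.Coprime s m := by
    have h1 : orderOf (a ^ s) = m / Nat.gcd m s := by rw [orderOf_pow, hm]
    rw [hσa, h1] at hords
    have hg : Nat.gcd m s ∣ m := Nat.gcd_dvd_left m s
    rcases (Nat.div_eq_self.mp hords) with h | h
    · omega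
    · exact Nat.coprime_comm.mp h
  -- conjugation formula
  have key : ∀ k : ℕ, (b ^ k)⁻¹ * a * b ^ k = a ^ (r ^ k) := by
    intro k
    induction k with
    | zero => simp
    | succ k ih =>
      rw [pow_succ, mul_inv_rev]
      have h1 : b⁻¹ * (b ^ k)⁻¹ * a * (b ^ k * b) = b⁻¹ * ((b ^ k)⁻¹ * a * b ^ k) * b := by
        group
      rw [h1, ih]
      have h2 : b⁻¹ * a ^ (r ^ k) * b = (b⁻¹ * a * b) ^ (r ^ k) := by
        simpa using (conj_pow (i := r ^ k) (a := b⁻¹) (b := a)).symm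
      rw [h2, hconj, ← pow_mul, ← pow_succ']
  -- decomposition of σ b
  have hsup : Subgroup.zpowers a ⊔ Subgroup.zpowers b = ⊤ := by
    rw [← hgen, Subgroup.zpowers_eq_closure, Subgroup.zpowers_eq_closure,
      ← Subgroup.closure_union]
    rw [Set.singleton_union]
  have hmem2 : σ b ∈ (Subgroup.zpowers a : Set G) * (Subgroup.zpowers b : Set G) := by
    rw [← Subgroup.normal_mul, hsup]
    simp
  obtain ⟨x, hx, y, hy, hxy⟩ := Set.mem_mul.mp hmem2
  obtain ⟨zi, hzi⟩ := hx
  obtain ⟨zj, hzj⟩ := hy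
  obtain ⟨t, htlt, hteq⟩ := zred a m zi hm hm0
  obtain ⟨k, hklt, hkeq⟩ := zred b n zj hn hn0
  have hzi' : a ^ zi = x := hzi
  have hzj' : b ^ zj = y := hzj
  have hσb : σ b = a ^ t * b ^ k := by
    rw [← hxy, ← hzi', ← hzj', hteq, hkeq]
  -- k ≠ 0
  have hkpos : 0 < k := by
    rcases Nat.eq_zero_or_pos k with h0 | h
    · exfalso
      have hσb' : σ b = a ^ t := by rw [hσb, h0, pow_zero, mul_one]
      have hcomm : σ (a * b) = σ (b * a) := by
        rw [map_mul, map_mul, hσa, hσb']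
        exact ((Commute.refl a).pow_pow s t).eq
      have hab : a * b = b * a := σ.injective hcomm
      have : b⁻¹ * a * b = a := by
        rw [mul_assoc, hab, ← mul_assoc, inv_mul_cancel, one_mul]
      rw [hconj] at this
      have : a ^ r = a ^ 1 := by rw [this, pow_one]
      rw [pow_eq_pow_iff_modEq, hm] at this
      exact hr1 this
    · exact h
  -- coprimality of r and m
  have hrcop : Nat.gcd m r = 1 := by
    have hd1 : Nat.gcd m r ∣ m := Nat.gcd_dvd_left m r
    have hd2 : Nat.gcd m r ∣ r := Nat.gcd_dvd_right m r
    have h1 : r ^ n ≡ 1 [MOD Nat.gcd m r] := hrn.of_dvd hd1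
    have h2 : r ^ n ≡ 0 [MOD Nat.gcd m r] :=
      (Nat.modEq_zero_iff_dvd).mpr (dvd_pow hd2 hn0.ne')
    have h3 : (1 : ℕ) ≡ 0 [MOD Nat.gcd m r] := h1.symm.trans h2
    have h4 : Nat.gcd m r ∣ 1 := (Nat.modEq_zero_iff_dvd).mp h3
    exact Nat.dvd_one.mp h4
  -- the main congruence
  have hrel := congrArg σ hconj
  rw [map_mul, map_mul, map_inv, hσa, hσb, map_pow, hσa] at hrel
  have hL : (a ^ t * b ^ k)⁻¹ * a ^ s * (a ^ t * b ^ k) = (b ^ k)⁻¹ * a ^ s * b ^ k := by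
    rw [mul_inv_rev]
    have hc : (a ^ t)⁻¹ * a ^ s * a ^ t = a ^ s := by
      rw [mul_assoc, ((Commute.refl a).pow_pow s t).eq, ← mul_assoc, inv_mul_cancel, one_mul]
    calc (b ^ k)⁻¹ * (a ^ t)⁻¹ * a ^ s * (a ^ t * b ^ k)
        = (b ^ k)⁻¹ * ((a ^ t)⁻¹ * a ^ s * a ^ t) * b ^ k := by group
      _ = (b ^ k)⁻¹ * a ^ s * b ^ k := by rw [hc]
  rw [hL] at hrel
  have hcp : (b ^ k)⁻¹ * a ^ s * b ^ k = ((b ^ k)⁻¹ * a * b ^ k) ^ s := by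
    have := conj_pow (i := s) (a := (b ^ k)⁻¹) (b := a)
    rw [inv_inv] at this
    exact this.symm
  rw [hcp, key k, ← pow_mul, ← pow_mul] at hrel
  rw [pow_eq_pow_iff_modEq, hm] at hrel
  -- hrel : r ^ k * s ≡ s * r [MOD m]
  have hrel2 : s * r ^ k ≡ s * r [MOD m] := by
    calc s * r ^ k = r ^ k * s := mul_comm _ _
      _ ≡ s * r [MOD m] := hrel
  have hrk : r ^ k ≡ r [MOD m] := Nat.ModEq.cancel_left_of_coprime (hs.symm) hrel2
  have hrk1 : r ^ (k - 1) ≡ 1 [MOD m] := by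
    have hke : k = (k - 1) + 1 := by omega
    rw [hke, pow_succ] at hrk
    have : r * r ^ (k - 1) ≡ r * 1 [MOD m] := by
      calc r * r ^ (k - 1) = r ^ (k - 1) * r := mul_comm _ _
        _ ≡ r [MOD m] := hrk
        _ = r * 1 := (mul_one r).symm
    exact Nat.ModEq.cancel_left_of_coprime hrcop this
  -- n₀ divides any exponent j with r ^ j ≡ 1
  have hdvd : ∀ j : ℕ, r ^ j ≡ 1 [MOD m] → n₀ ∣ j := by
    intro j hj
    rcases Nat.eq_zero_or_pos (j % n₀) with h | h
    · exact Nat.dvd_of_mod_eq_zero h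
    · exfalso
      have he : r ^ j = (r ^ n₀) ^ (j / n₀) * r ^ (j % n₀) := by
        rw [← pow_mul, ← pow_add, Nat.div_add_mod]
      have h1 : (r ^ n₀) ^ (j / n₀) * r ^ (j % n₀) ≡ 1 ^ (j / n₀) * r ^ (j % n₀) [MOD m] :=
        (hn₀.pow (j / n₀)).mul_right _
      have h2 : r ^ (j % n₀) ≡ 1 [MOD m] := by
        have := (he ▸ hj : (r ^ n₀) ^ (j / n₀) * r ^ (j % n₀) ≡ 1 [MOD m])
        calc r ^ (j % n₀) = 1 ^ (j / n₀) * r ^ (j % n₀) := by rw [one_pow, one_mul]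
          _ ≡ (r ^ n₀) ^ (j / n₀) * r ^ (j % n₀) [MOD m] := h1.symm
          _ ≡ 1 [MOD m] := this
      have := hn₀min _ h h2
      exact absurd (Nat.mod_lt j hn₀pos) (not_lt.mpr this)
  have hn₀n : n₀ ∣ n := hdvd n hrn
  have hk1 : n₀ ∣ (k - 1) := hdvd _ hrk1
  obtain ⟨l, hl⟩ := hk1
  have hkval : k = 1 + l * n₀ := by rw [mul_comm l n₀]; omega
  have hllt : l < n / n₀ := by
    have h1 : l * n₀ < n := by rw [mul_comm l n₀]; omega
    have h2 : (n / n₀) * n₀ = n := Nat.div_mul_cancel hn₀n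
    have := h2 ▸ h1
    exact Nat.lt_of_mul_lt_mul_right this
  exact ⟨⟨s, hs, hσa⟩, ⟨t, l, hllt, by rw [hσb, hkval]⟩⟩
end

section
/- Let G = ⟨a, b | a^m = b^n = 1, b⁻¹ab = a^r⟩ with m, n odd and coprime, r^n ≡ 1 (mod m), let n₀ be the order of r mod m, and suppose no nontrivial Sylow subgroup of ⟨b⟩ is central in G (equivalently, every prime p dividing n with p | o(b^{n₀}) = n/n₀ also divides n₀). If σ is an automorphism of G of order 2 with σ(b) = a^i b^{1+l n₀}, then l n₀ ≡ 0 (mod n), i.e., σ(b) = a^i b; moreover σ(a) = a^s with s² ≡ 1 (mod m). -/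
theorem involution_automorphism_form
    {G : Type*} [Group G] [Finite G] (a b : G) (m n r n₀ : ℕ)
    (hm : orderOf a = m) (hn : orderOf b = n)
    (hmodd : Odd m) (hnodd : Odd n)
    (hgen : Subgroup.closure ({a, b} : Set G) = ⊤)
    (hconj : b⁻¹ * a * b = a ^ r)
    (hcop : Nat.Coprime m n)
    (hrn : r ^ n ≡ 1 [MOD m])
    (hn₀pos : 0 < n₀) (hn₀ : r ^ n₀ ≡ 1 [MOD m])
    (hn₀min : ∀ k : ℕ, 0 < k → r ^ k ≡ 1 [MOD m] → n₀ ≤ k)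
    (hsylow : ∀ p : ℕ, p.Prime → p ∣ n → p ∣ n₀)
    (σ : MulAut G) (hord : orderOf σ = 2)
    (i l : ℕ) (hσb : σ b = a ^ i * b ^ (1 + l * n₀)) :
    n ∣ l * n₀ ∧ σ b = a ^ i * b ∧ ∃ s : ℕ, σ a = a ^ s ∧ s ^ 2 ≡ 1 [MOD m] := by
  have hmpos : 0 < m := hm ▸ orderOf_pos a
  have hnpos : 0 < n := hn ▸ orderOf_pos b
  have apow : ∀ x y : ℕ, x ≡ y [MOD m] → a ^ x = a ^ y := fun x y h => by
    rw [pow_eq_pow_iff_modEq, hm]; exact h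
  -- basic commutation: conjugation of a-powers by b
  have key : ∀ x : ℕ, b⁻¹ * a ^ x * b = a ^ (x * r) := by
    intro x
    induction x with
    | zero => simp
    | succ x ih =>
      have h1 : b⁻¹ * a ^ (x + 1) * b = (b⁻¹ * a ^ x * b) * (b⁻¹ * a * b) := by
        rw [pow_succ]; group
      rw [h1, ih, hconj, ← pow_add]
      congr 1; ring
  have L0 : ∀ x : ℕ, a ^ x * b = b * a ^ (x * r) := by
    intro x
    calc a ^ x * b = b * (b⁻¹ * a ^ x * b) := by group
      _ = b * a ^ (x * r) := by rw [key]
  have L1 : ∀ x j : ℕ, a ^ x * b ^ j = b ^ j * a ^ (x * r ^ j) := by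
    intro x j
    induction j with
    | zero => simp
    | succ j ih =>
      calc a ^ x * b ^ (j + 1) = (a ^ x * b ^ j) * b := by rw [pow_succ, mul_assoc]
        _ = b ^ j * (a ^ (x * r ^ j) * b) := by rw [ih, mul_assoc]
        _ = b ^ j * (b * a ^ (x * r ^ j * r)) := by rw [L0]
        _ = b ^ (j + 1) * a ^ (x * r ^ (j + 1)) := by
            rw [pow_succ b, pow_succ r, mul_assoc, mul_assoc]
  have hr : r ^ (n₀ - 1) * r = r ^ n₀ := by
    rw [← pow_succ]; congr 1; omega
  have L2 : ∀ x j : ℕ, b ^ j * a ^ x = a ^ (x * (r ^ (n₀ - 1)) ^ j) * b ^ j := by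
    intro x j
    rw [L1]
    congr 1
    apply apow
    have h1 : x * (r ^ (n₀ - 1)) ^ j * r ^ j = x * (r ^ n₀) ^ j := by
      rw [mul_assoc, ← mul_pow, hr]
    have h2 : x * (r ^ n₀) ^ j ≡ x * 1 ^ j [MOD m] :=
      Nat.ModEq.mul_left x (hn₀.pow j)
    calc x ≡ x * (r ^ n₀) ^ j [MOD m] := by simpa using h2.symm
      _ = x * (r ^ (n₀ - 1)) ^ j * r ^ j := h1.symm
  set k := 1 + l * n₀ with hk
  have L3 : ∀ x t : ℕ, ∃ y : ℕ, (a ^ x * b ^ k) ^ t = a ^ y * b ^ (k * t) := by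
    intro x t
    induction t with
    | zero => exact ⟨0, by simp⟩
    | succ t ih =>
      obtain ⟨y, ih⟩ := ih
      refine ⟨y + x * (r ^ (n₀ - 1)) ^ (k * t), ?_⟩
      calc (a ^ x * b ^ k) ^ (t + 1) = (a ^ x * b ^ k) ^ t * (a ^ x * b ^ k) := pow_succ _ _
        _ = a ^ y * (b ^ (k * t) * a ^ x) * b ^ k := by rw [ih]; group
        _ = a ^ y * (a ^ (x * (r ^ (n₀ - 1)) ^ (k * t)) * b ^ (k * t)) * b ^ k := by rw [L2]
        _ = a ^ (y + x * (r ^ (n₀ - 1)) ^ (k * t)) * b ^ (k * (t + 1)) := by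
            rw [pow_add a, mul_add k, mul_one, pow_add b]; group
            congr 2; simp only [hk]; push_cast; ring
  -- zpowers a is normal
  have hba : b * a = a ^ (r ^ (n₀ - 1)) * b := by
    have h := L2 1 1
    simpa using h
  have hN : (Subgroup.zpowers a).Normal := by
    rw [← Subgroup.normalizer_eq_top_iff, ← top_le_iff, ← hgen, Subgroup.closure_le]
    intro x hx
    rcases hx with rfl | hx
    · exact Subgroup.le_normalizer (Subgroup.mem_zpowers x)
    · rcases hx with rfl
      refine Subgroup.mem_normalizer_iff.mpr fun h => ⟨?_, ?_⟩
      · rintro ⟨z, rfl⟩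
        refine ⟨(r ^ (n₀ - 1) : ℕ) * z, ?_⟩
        have : x * a ^ z * x⁻¹ = (x * a * x⁻¹) ^ z := by
          rw [conj_zpow]
        rw [this]
        have hxa : x * a * x⁻¹ = a ^ (r ^ (n₀ - 1) : ℕ) := by
          rw [mul_inv_eq_iff_eq_mul, hba]
        rw [hxa, ← zpow_natCast, ← zpow_mul]
      · rintro ⟨z, hz⟩
        have hz' : a ^ z = x * h * x⁻¹ := hz
        have hh : h = x⁻¹ * a ^ z * x := by rw [hz']; group
        refine ⟨(r : ℕ) * z, ?_⟩
        have hc : (x⁻¹ * a * x) ^ z = x⁻¹ * a ^ z * x := by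
          have h2 : (x⁻¹ * a * (x⁻¹)⁻¹) ^ z = x⁻¹ * a ^ z * (x⁻¹)⁻¹ := conj_zpow
          simpa using h2
        show a ^ ((r : ℕ) * z : ℤ) = h
        rw [hh, ← hc, hconj, ← zpow_natCast, ← zpow_mul]
  -- σ a ∈ zpowers a
  have hσa_mem : σ a ∈ Subgroup.zpowers a := by
    have hQtop : Subgroup.zpowers ((QuotientGroup.mk' (Subgroup.zpowers a)) b) = ⊤ := by
      have hsurj : Function.Surjective (QuotientGroup.mk' (Subgroup.zpowers a)) :=
        QuotientGroup.mk'_surjective _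
      have htop : Subgroup.map (QuotientGroup.mk' (Subgroup.zpowers a)) ⊤ = ⊤ :=
        Subgroup.map_top_of_surjective _ hsurj
      rw [← hgen, MonoidHom.map_closure, Set.image_insert_eq, Set.image_singleton] at htop
      have ha1 : (QuotientGroup.mk' (Subgroup.zpowers a)) a = 1 :=
        (QuotientGroup.eq_one_iff _).mpr (Subgroup.mem_zpowers a)
      rw [ha1] at htop
      rw [eq_top_iff, ← htop, Subgroup.closure_le]
      rintro x (rfl | hx)
      · exact Subgroup.one_mem _
      · rcases hx with rfl
        exact Subgroup.mem_zpowers _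
    have hcardQ : Nat.card (G ⧸ Subgroup.zpowers a) ∣ n := by
      have h1 : Nat.card (G ⧸ Subgroup.zpowers a)
          = orderOf ((QuotientGroup.mk' (Subgroup.zpowers a)) b) := by
        rw [← Nat.card_zpowers, hQtop, Subgroup.card_top]
      rw [h1, ← hn]
      exact orderOf_map_dvd _ b
    have hσaord : orderOf (σ a) = m := by
      rw [← hm]
      exact orderOf_injective σ.toMonoidHom σ.injective a
    have h2 : orderOf ((QuotientGroup.mk' (Subgroup.zpowers a)) (σ a)) ∣ m := by
      rw [← hσaord]; exact orderOf_map_dvd _ _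
    have h3 : orderOf ((QuotientGroup.mk' (Subgroup.zpowers a)) (σ a)) ∣ n :=
      dvd_trans (orderOf_dvd_natCard _) hcardQ
    have h4 : orderOf ((QuotientGroup.mk' (Subgroup.zpowers a)) (σ a)) ∣ Nat.gcd m n :=
      Nat.dvd_gcd h2 h3
    have hg1 : Nat.gcd m n = 1 := hcop
    rw [hg1, Nat.dvd_one] at h4
    exact (QuotientGroup.eq_one_iff _).mp (orderOf_eq_one_iff.mp h4)
  obtain ⟨s, hs⟩ : ∃ s : ℕ, a ^ s = σ a :=
    (Submonoid.mem_powers_iff _ _).mp (mem_powers_iff_mem_zpowers.mpr hσa_mem)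
  -- σ is an involution
  have hσσ : ∀ x : G, σ (σ x) = x := by
    intro x
    have h1 : σ ^ 2 = 1 := by rw [← hord]; exact pow_orderOf_eq_one σ
    have h2 := congrArg (fun f : MulAut G => f x) h1
    simpa [sq] using h2
  -- s^2 ≡ 1 mod m
  have hs2 : s ^ 2 ≡ 1 [MOD m] := by
    have h := hσσ a
    rw [← hs, map_pow, ← hs, ← pow_mul] at h
    have h2 : a ^ (s * s) = a ^ 1 := by simpa using h
    have h3 := (pow_eq_pow_iff_modEq.mp h2)
    rw [hm] at h3
    simpa [sq] using h3
  -- main computation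
  have hb2 : σ (σ b) = b := hσσ b
  rw [hσb, map_mul, map_pow, map_pow, hσb, ← hs] at hb2
  obtain ⟨y, hy⟩ := L3 i k
  rw [hy] at hb2
  have hb3 : a ^ (s * i + y) * b ^ (k * k) = b := by
    rw [pow_add, pow_mul, mul_assoc]
    exact hb2
  have hb5 : a ^ (s * i + y) = b ^ ((1 : ℤ) - (k * k : ℕ)) := by
    rw [zpow_sub, zpow_one, zpow_natCast, eq_mul_inv_iff_mul_eq]
    exact hb3
  have hone : a ^ (s * i + y) = 1 := by
    have h6 : a ^ ((s * i + y) * n) = 1 := by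
      calc a ^ ((s * i + y) * n) = (a ^ (s * i + y)) ^ n := pow_mul a _ n
        _ = (b ^ ((1 : ℤ) - (k * k : ℕ))) ^ n := by rw [hb5]
        _ = (b ^ (n : ℤ)) ^ ((1 : ℤ) - (k * k : ℕ)) := by
            rw [← zpow_natCast (b ^ _), ← zpow_mul, ← zpow_mul, mul_comm]
        _ = 1 := by rw [zpow_natCast, ← hn, pow_orderOf_eq_one, one_zpow]
    have h7 : m ∣ (s * i + y) * n := by
      rw [← hm]; exact orderOf_dvd_of_pow_eq_one h6
    have h8 : m ∣ s * i + y := Nat.Coprime.dvd_of_dvd_mul_right hcop h7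
    exact orderOf_dvd_iff_pow_eq_one.mp (by rw [hm]; exact h8)
  have hzb : b ^ ((1 : ℤ) - (k * k : ℕ)) = 1 := by rw [← hb5, hone]
  have hdvd : (n : ℤ) ∣ ((1 : ℤ) - (k * k : ℕ)) := by
    have := orderOf_dvd_iff_zpow_eq_one.mpr hzb
    rwa [hn] at this
  have hndN : n ∣ (l * n₀) * (l * n₀ + 2) := by
    have h9 : (n : ℤ) ∣ ((k * k : ℕ) : ℤ) - 1 := by
      have := dvd_neg.mpr hdvd
      rwa [neg_sub] at this
    have h10 : (((l * n₀) * (l * n₀ + 2) : ℕ) : ℤ) = ((k * k : ℕ) : ℤ) - 1 := by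
      rw [hk]; push_cast; ring
    rw [← Int.natCast_dvd_natCast]
    rw [h10]
    exact h9
  have hcop2 : Nat.Coprime n (l * n₀ + 2) := by
    by_contra hc
    set g := Nat.gcd n (l * n₀ + 2) with hgdef
    have hp : g.minFac.Prime := Nat.minFac_prime hc
    have hpn : g.minFac ∣ n := (Nat.minFac_dvd g).trans (Nat.gcd_dvd_left _ _)
    have hpL2 : g.minFac ∣ l * n₀ + 2 := (Nat.minFac_dvd g).trans (Nat.gcd_dvd_right _ _)
    have hpn₀ : g.minFac ∣ n₀ := hsylow _ hp hpn
    have hpL : g.minFac ∣ l * n₀ := Dvd.dvd.mul_left hpn₀ l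
    have hp2 : g.minFac ∣ 2 := by
      have := Nat.dvd_sub hpL2 hpL
      have he : l * n₀ + 2 - l * n₀ = 2 := by omega
      rwa [he] at this
    have hp2' : g.minFac = 2 := (Nat.prime_dvd_prime_iff_eq hp Nat.prime_two).mp hp2
    rw [hp2'] at hpn
    obtain ⟨c, hc2⟩ := hpn
    obtain ⟨d, hd⟩ := hnodd
    omega
  have hfinal : n ∣ l * n₀ := hcop2.dvd_of_dvd_mul_right hndN
  have hbk : b ^ k = b := by
    rw [hk, pow_add, pow_one]
    have hb1 : b ^ (l * n₀) = 1 :=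
      orderOf_dvd_iff_pow_eq_one.mp (by rw [hn]; exact hfinal)
    rw [hb1, mul_one]
  exact ⟨hfinal, by rw [hσb, hbk], s, hs.symm, hs2⟩
end

section
/- Let G = ⟨a, b | a^m = b^n = 1, b⁻¹ab = a^r⟩ with r^n ≡ 1 (mod m) and gcd(m,n)=1, and let S = {a^{i₁} b^j, a^{i₂} b^j} with 1 ≤ i₁, i₂ ≤ m, 1 ≤ j ≤ n. Then ⟨S⟩ = G if and only if gcd(j, n) = 1 and gcd(i₂ − i₁, i₁·(r^j + r^{2j} + ... + r^{nj}) mod m, m) = 1. -/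
section Aux

variable {G : Type*} [Group G]

lemma aux_conj_pow (a b : G) (r : ℕ) (hconj : b⁻¹ * a * b = a ^ r) :
    ∀ s : ℕ, (b ^ s)⁻¹ * a * b ^ s = a ^ r ^ s := by
  intro s
  induction s with
  | zero => simp
  | succ s ih =>
    rw [pow_succ b s, mul_inv_rev]
    calc b⁻¹ * (b ^ s)⁻¹ * a * (b ^ s * b)
        = b⁻¹ * ((b ^ s)⁻¹ * a * b ^ s) * b := by group
      _ = b⁻¹ * a ^ r ^ s * b := by rw [ih]
      _ = (b⁻¹ * a * b) ^ r ^ s := by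
          have h : (b⁻¹ * a * (b⁻¹)⁻¹) ^ r ^ s = b⁻¹ * a ^ r ^ s * (b⁻¹)⁻¹ := conj_pow
          rw [inv_inv] at h; rw [h]
      _ = a ^ r ^ (s + 1) := by rw [hconj, ← pow_mul, ← pow_succ']

lemma aux_conj_powk (a b : G) (r : ℕ) (hconj : b⁻¹ * a * b = a ^ r)
    (s k : ℕ) : (b ^ s)⁻¹ * a ^ k * b ^ s = a ^ (k * r ^ s) := by
  have h1 : ((b ^ s)⁻¹ * a * ((b ^ s)⁻¹)⁻¹) ^ k = (b ^ s)⁻¹ * a ^ k * ((b ^ s)⁻¹)⁻¹ := conj_pow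
  rw [inv_inv] at h1
  rw [← h1, aux_conj_pow a b r hconj s, ← pow_mul, mul_comm]

lemma aux_conj_zpow (a b : G) (r : ℕ) (hconj : b⁻¹ * a * b = a ^ r)
    (s : ℕ) (e : ℤ) : (b ^ s)⁻¹ * a ^ e * b ^ s = a ^ (e * (r ^ s : ℕ)) := by
  have h1 : ((b ^ s)⁻¹ * a * ((b ^ s)⁻¹)⁻¹) ^ e = (b ^ s)⁻¹ * a ^ e * ((b ^ s)⁻¹)⁻¹ := conj_zpow
  rw [inv_inv] at h1
  rw [← h1, aux_conj_pow a b r hconj s, ← zpow_natCast a (r ^ s), ← zpow_mul, mul_comm]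

lemma aux_swap (a b : G) (r : ℕ) (hconj : b⁻¹ * a * b = a ^ r)
    (s k : ℕ) : a ^ k * b ^ s = b ^ s * a ^ (k * r ^ s) := by
  rw [← aux_conj_powk a b r hconj s k]; group


lemma aux_xpow (a b : G) (r i j : ℕ) (hconj : b⁻¹ * a * b = a ^ r) :
    ∀ t : ℕ, (a ^ i * b ^ j) ^ t
      = b ^ (j * t) * a ^ (i * ∑ k ∈ Finset.range t, r ^ ((k + 1) * j)) := by
  intro t
  induction t with
  | zero => simp
  | succ t ih =>
    have hsum : i * ∑ k ∈ Finset.range (t + 1), r ^ ((k + 1) * j)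
        = (i * ∑ k ∈ Finset.range t, r ^ ((k + 1) * j) + i) * r ^ j := by
      rw [Finset.sum_range_succ']
      have : ∀ k, r ^ ((k + 1 + 1) * j) = r ^ ((k + 1) * j) * r ^ j := by
        intro k; rw [← pow_add]; congr 1; ring
      rw [Finset.sum_congr rfl (fun k _ => this k), ← Finset.sum_mul]
      simp only [zero_add, one_mul]
      ring
    rw [pow_succ, ih, hsum]
    calc b ^ (j * t) * a ^ (i * ∑ k ∈ Finset.range t, r ^ ((k + 1) * j)) * (a ^ i * b ^ j)
        = b ^ (j * t) * (a ^ (i * ∑ k ∈ Finset.range t, r ^ ((k + 1) * j) + i) * b ^ j) := by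
          rw [pow_add]; group
      _ = b ^ (j * t) * (b ^ j * a ^ ((i * ∑ k ∈ Finset.range t, r ^ ((k + 1) * j) + i) * r ^ j)) := by
          rw [aux_swap a b r hconj]
      _ = b ^ (j * (t + 1)) * a ^ ((i * ∑ k ∈ Finset.range t, r ^ ((k + 1) * j) + i) * r ^ j) := by
          rw [← mul_assoc, ← pow_add]; ring_nf

lemma aux_normal (a b : G) (r n c : ℕ) (hconj : b⁻¹ * a * b = a ^ r)
    (hb : b ^ n = 1) (hn1 : 1 ≤ n)
    (hgen : Subgroup.closure ({a, b} : Set G) = ⊤) :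
    (Subgroup.zpowers (a ^ c)).Normal := by
  rw [← Subgroup.normalizer_eq_top_iff, ← top_le_iff, ← hgen, Subgroup.closure_le]
  have hmem : ∀ (s : ℕ) (e : ℤ), (b ^ s)⁻¹ * (a ^ c) ^ e * b ^ s ∈ Subgroup.zpowers (a ^ c) := by
    intro s e
    have h1 : (a ^ c) ^ e = a ^ ((c : ℤ) * e) := by
      rw [← zpow_natCast a c, ← zpow_mul]
    have h3 : ((b ^ s)⁻¹ * a * ((b ^ s)⁻¹)⁻¹) ^ ((c : ℤ) * e)
        = (b ^ s)⁻¹ * a ^ ((c : ℤ) * e) * ((b ^ s)⁻¹)⁻¹ := conj_zpow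
    rw [inv_inv] at h3
    rw [h1, ← h3, aux_conj_pow a b r hconj s]
    refine Subgroup.mem_zpowers_iff.2 ⟨e * (r ^ s : ℕ), ?_⟩
    show (a ^ c) ^ (e * ((r ^ s : ℕ) : ℤ)) = (a ^ r ^ s) ^ ((c : ℤ) * e)
    rw [← zpow_natCast a c, ← zpow_natCast a (r ^ s), ← zpow_mul, ← zpow_mul]
    congr 1; push_cast; ring
  have hb' : ∀ g ∈ Subgroup.zpowers (a ^ c),
      ∀ s : ℕ, (b ^ s)⁻¹ * g * b ^ s ∈ Subgroup.zpowers (a ^ c) := by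
    intro g hg s
    obtain ⟨e, rfl⟩ := Subgroup.mem_zpowers_iff.1 hg
    exact hmem s e
  refine Set.insert_subset_iff.2 ⟨?_, Set.singleton_subset_iff.2 ?_⟩
  case _ =>
    have key : ∀ e : ℤ, a * (a ^ c) ^ e * a⁻¹ = (a ^ c) ^ e := by
      intro e
      have hc : Commute a ((a ^ c) ^ e) := ((Commute.refl a).pow_right c).zpow_right e
      rw [hc.eq]; group
    have key2 : ∀ e : ℤ, a⁻¹ * (a ^ c) ^ e * a = (a ^ c) ^ e := by
      intro e
      have hc : Commute a⁻¹ ((a ^ c) ^ e) :=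
        (((Commute.refl a).pow_right c).zpow_right e).inv_left
      rw [hc.eq]; group
    rw [SetLike.mem_coe, Subgroup.mem_normalizer_iff]
    intro h
    constructor
    · intro hh
      obtain ⟨e, he⟩ := Subgroup.mem_zpowers_iff.1 hh
      exact Subgroup.mem_zpowers_iff.2 ⟨e, by rw [← he, key e]⟩
    · intro hh
      obtain ⟨e, he⟩ := Subgroup.mem_zpowers_iff.1 hh
      refine Subgroup.mem_zpowers_iff.2 ⟨e, ?_⟩
      have h2 := key2 e
      rw [he] at h2
      rw [he, ← h2]; group
  case _ =>
    rw [SetLike.mem_coe, Subgroup.mem_normalizer_iff]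
    intro h
    have hbinv : b⁻¹ = b ^ (n - 1) := by
      apply inv_eq_of_mul_eq_one_right
      rw [← pow_succ', Nat.sub_add_cancel hn1, hb]
    constructor
    · intro hh
      have heq : b * h * b⁻¹ = (b ^ (n - 1))⁻¹ * h * b ^ (n - 1) := by
        rw [← hbinv, inv_inv]
      rw [heq]
      exact hb' h hh (n - 1)
    · intro hh
      have h4 := hb' _ hh 1
      have h5 : (b ^ 1)⁻¹ * (b * h * b⁻¹) * b ^ 1 = h := by rw [pow_one]; group
      rwa [h5] at h4


end Aux

theorem generating_pair_criterion
    {G : Type*} [Group G] [Finite G] (a b : G) (m n r : ℕ)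
    (hm : orderOf a = m) (hn : orderOf b = n)
    (hgen : Subgroup.closure ({a, b} : Set G) = ⊤)
    (hconj : b⁻¹ * a * b = a ^ r)
    (hcop : Nat.Coprime m n)
    (hrn : r ^ n ≡ 1 [MOD m])
    (i₁ i₂ j : ℕ)
    (hi₁ : 1 ≤ i₁) (hi₁' : i₁ ≤ m) (hi₂ : 1 ≤ i₂) (hi₂' : i₂ ≤ m)
    (hj : 1 ≤ j) (hj' : j ≤ n) :
    Subgroup.closure ({a ^ i₁ * b ^ j, a ^ i₂ * b ^ j} : Set G) = ⊤ ↔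
      Nat.Coprime j n ∧
      Nat.gcd ((i₂ : ℤ) - (i₁ : ℤ)).natAbs
        (Nat.gcd ((i₁ * ∑ k ∈ Finset.range n, r ^ ((k + 1) * j)) % m) m) = 1 := by
  have hn1 : 1 ≤ n := le_trans hj hj'
  have ham : a ^ m = 1 := hm ▸ pow_orderOf_eq_one a
  have hbn : b ^ n = 1 := hn ▸ pow_orderOf_eq_one b
  set S : ℕ := ∑ k ∈ Finset.range n, r ^ ((k + 1) * j) with hS
  set Y : ℕ := i₁ * S with hY
  set x := a ^ i₁ * b ^ j with hx
  set y := a ^ i₂ * b ^ j with hy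
  set d : ℤ := (i₂ : ℤ) - (i₁ : ℤ) with hd
  have hgcdmod : Nat.gcd (Y % m) m = Nat.gcd Y m := by
    rw [← Nat.gcd_rec]; exact Nat.gcd_comm m Y
  have hxny : ∀ i : ℕ, (a ^ i * b ^ j) ^ n = a ^ (i * S) := by
    intro i
    rw [aux_xpow a b r i j hconj n, mul_comm j n, pow_mul, hbn, one_pow, one_mul]
  have hz1 : x⁻¹ * y = a ^ (d * ((r ^ j : ℕ) : ℤ)) := by
    have h1 : x⁻¹ * y = (b ^ j)⁻¹ * a ^ d * b ^ j := by
      rw [hx, hy, hd, zpow_sub, zpow_natCast, zpow_natCast]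
      group
    rw [h1, aux_conj_zpow a b r hconj j d]
  rw [hgcdmod]
  constructor
  · intro hH
    have hjn : Nat.Coprime j n := by
      have hA : (Subgroup.zpowers a).Normal := by
        have := aux_normal a b r n 1 hconj hbn hn1 hgen
        rwa [pow_one] at this
      set A := Subgroup.zpowers a with hA'
      letI := hA
      set π := QuotientGroup.mk' A with hπ
      have hπa : π a = 1 := (QuotientGroup.eq_one_iff a).2 (Subgroup.mem_zpowers a)
      have hπx : π x = (π b) ^ j := by
        rw [hx, map_mul, map_pow, map_pow, hπa, one_pow, one_mul]
      have hπy : π y = (π b) ^ j := by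
        rw [hy, map_mul, map_pow, map_pow, hπa, one_pow, one_mul]
      have hmap : Subgroup.map π ⊤ = ⊤ :=
        Subgroup.map_top_of_surjective _ (QuotientGroup.mk'_surjective A)
      rw [← hH, MonoidHom.map_closure, Set.image_pair, hπx, hπy,
        Set.pair_eq_singleton, ← Subgroup.zpowers_eq_closure] at hmap
      have hπb : π b ∈ Subgroup.zpowers ((π b) ^ j) := hmap ▸ Subgroup.mem_top _
      obtain ⟨t, ht⟩ := Subgroup.mem_zpowers_iff.1 hπb
      have hbt : (π b) ^ ((j : ℤ) * t - 1) = 1 := by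
        rw [zpow_sub, zpow_one, zpow_mul, zpow_natCast, ht, mul_inv_cancel]
      have hdvd : (n : ℤ) ∣ (j : ℤ) * t - 1 := by
        have hmem : b ^ ((j : ℤ) * t - 1) ∈ A := by
          refine (QuotientGroup.eq_one_iff _).1 ?_
          have : π (b ^ ((j : ℤ) * t - 1)) = 1 := by rw [map_zpow, hbt]
          exact this
        obtain ⟨s, hs⟩ := Subgroup.mem_zpowers_iff.1 hmem
        have hc1 : (b ^ ((j : ℤ) * t - 1)) ^ (m : ℤ) = 1 := by
          rw [← hs, ← zpow_mul, mul_comm, zpow_mul, zpow_natCast, ham, one_zpow]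
        have hc2 : (b ^ ((j : ℤ) * t - 1)) ^ (n : ℤ) = 1 := by
          rw [← zpow_mul, mul_comm, zpow_mul, zpow_natCast, hbn, one_zpow]
        have hmn : (1 : ℤ) = m * Nat.gcdA m n + n * Nat.gcdB m n := by
          have h0 := Nat.gcd_eq_gcd_ab m n
          rw [hcop] at h0
          simpa using h0
        have hone : b ^ ((j : ℤ) * t - 1) = 1 := by
          calc b ^ ((j : ℤ) * t - 1)
              = (b ^ ((j : ℤ) * t - 1)) ^ ((m : ℤ) * Nat.gcdA m n + (n : ℤ) * Nat.gcdB m n) := by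
                rw [← hmn, zpow_one]
            _ = ((b ^ ((j : ℤ) * t - 1)) ^ (m : ℤ)) ^ Nat.gcdA m n *
                ((b ^ ((j : ℤ) * t - 1)) ^ (n : ℤ)) ^ Nat.gcdB m n := by
                rw [zpow_add, zpow_mul, zpow_mul]
            _ = 1 := by rw [hc1, hc2, one_zpow, one_zpow, one_mul]
        have := orderOf_dvd_iff_zpow_eq_one.2 hone
        rwa [hn] at this
      have hg1 : (Nat.gcd j n : ℤ) ∣ 1 := by
        have h1 : (Nat.gcd j n : ℤ) ∣ (j : ℤ) := Int.natCast_dvd_natCast.2 (Nat.gcd_dvd_left j n)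
        have h2 : (Nat.gcd j n : ℤ) ∣ (n : ℤ) := Int.natCast_dvd_natCast.2 (Nat.gcd_dvd_right j n)
        have h3 : (Nat.gcd j n : ℤ) ∣ (j : ℤ) * t - ((j : ℤ) * t - 1) :=
          dvd_sub (h1.mul_right t) (h2.trans hdvd)
        simpa using h3
      have : Nat.gcd j n ∣ 1 := by exact_mod_cast hg1
      exact Nat.dvd_one.1 this
    refine ⟨hjn, ?_⟩
    by_contra hne
    set g0 := Nat.gcd d.natAbs (Nat.gcd Y m) with hg0
    set p := g0.minFac with hp
    have hpp : p.Prime := Nat.minFac_prime hne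
    have hpd : (p : ℤ) ∣ d := by
      have h1 : p ∣ d.natAbs := (Nat.minFac_dvd g0).trans (Nat.gcd_dvd_left _ _)
      exact Int.dvd_natAbs.1 (Int.natCast_dvd_natCast.2 h1)
    have hpY : p ∣ Y := (Nat.minFac_dvd g0).trans
      ((Nat.gcd_dvd_right _ _).trans (Nat.gcd_dvd_left Y m))
    have hpm : p ∣ m := (Nat.minFac_dvd g0).trans
      ((Nat.gcd_dvd_right _ _).trans (Nat.gcd_dvd_right Y m))
    have hN : (Subgroup.zpowers (a ^ p)).Normal := aux_normal a b r n p hconj hbn hn1 hgen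
    set N := Subgroup.zpowers (a ^ p) with hN'
    letI := hN
    set π := QuotientGroup.mk' N with hπ
    have hπxy : π x = π y := by
      have hxy : x⁻¹ * y ∈ N := by
        rw [hz1]
        obtain ⟨d', hd'⟩ := hpd
        rw [hd']
        refine Subgroup.mem_zpowers_iff.2 ⟨d' * ((r ^ j : ℕ) : ℤ), ?_⟩
        rw [← zpow_natCast a p, ← zpow_mul]
        congr 1; ring
      have h1 : π (x⁻¹ * y) = 1 := (QuotientGroup.eq_one_iff _).2 hxy
      rw [map_mul, map_inv] at h1
      exact (inv_mul_eq_one.1 h1)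
    have hmap : Subgroup.map π ⊤ = ⊤ :=
      Subgroup.map_top_of_surjective _ (QuotientGroup.mk'_surjective N)
    rw [← hH, MonoidHom.map_closure, Set.image_pair, hπxy,
      Set.pair_eq_singleton, ← Subgroup.zpowers_eq_closure] at hmap
    have hπa : π a ∈ Subgroup.zpowers (π y) := hmap ▸ Subgroup.mem_top _
    obtain ⟨t, ht⟩ := Subgroup.mem_zpowers_iff.1 hπa
    have hπyn : (π y) ^ n = 1 := by
      rw [← hπxy, ← map_pow, hx, hxny i₁]
      refine (QuotientGroup.eq_one_iff _).2 ?_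
      obtain ⟨Y', hY'⟩ := hpY
      rw [show i₁ * S = Y from rfl, hY', pow_mul]
      exact Subgroup.mem_zpowers_iff.2 ⟨(Y' : ℤ), by rw [zpow_natCast]⟩
    have hπan : (π a) ^ n = 1 := by
      have h1 : (π a) ^ (n : ℤ) = ((π y) ^ (n : ℤ)) ^ t := by
        rw [← ht, ← zpow_mul, ← zpow_mul, mul_comm]
      have h2 : (π a) ^ (n : ℤ) = 1 := by rw [h1, zpow_natCast, hπyn, one_zpow]
      rw [← zpow_natCast]; exact h2
    have hanN : a ^ n ∈ N := by
      refine (QuotientGroup.eq_one_iff _).1 ?_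
      show π (a ^ n) = 1
      rw [map_pow]; exact hπan
    obtain ⟨s, hs⟩ := Subgroup.mem_zpowers_iff.1 hanN
    have hone : a ^ ((n : ℤ) - (p : ℤ) * s) = 1 := by
      rw [zpow_sub, zpow_mul, zpow_natCast, zpow_natCast, hs, mul_inv_cancel]
    have hdvd2 : (m : ℤ) ∣ (n : ℤ) - (p : ℤ) * s := by
      have := orderOf_dvd_iff_zpow_eq_one.2 hone
      rwa [hm] at this
    have hpn : p ∣ n := by
      have h1 : (p : ℤ) ∣ (m : ℤ) := Int.natCast_dvd_natCast.2 hpm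
      have h2 := h1.trans hdvd2
      have h3 : (p : ℤ) ∣ (p : ℤ) * s := dvd_mul_right _ _
      have h4 : (p : ℤ) ∣ (n : ℤ) := by
        have := dvd_add h2 h3
        simpa using this
      exact_mod_cast h4
    have h5 : p ∣ Nat.gcd m n := Nat.dvd_gcd hpm hpn
    rw [hcop] at h5
    exact hpp.one_lt.ne' (Nat.dvd_one.1 h5)
  · rintro ⟨hjn, hg⟩
    set H := Subgroup.closure ({x, y} : Set G) with hHdef
    have hxH : x ∈ H := Subgroup.subset_closure (by left; rfl)
    have hyH : y ∈ H := Subgroup.subset_closure (by right; rfl)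
    have hz1H : a ^ (d * ((r ^ j : ℕ) : ℤ)) ∈ H := hz1 ▸ mul_mem (inv_mem hxH) hyH
    have hz2H : a ^ Y ∈ H := by
      have := pow_mem hxH n
      rwa [hx, hxny i₁] at this
    have hrm : Nat.Coprime r m := by
      have h1 : (m : ℤ) ∣ 1 - (r : ℤ) ^ n := by
        have h0 := hrn.dvd
        exact_mod_cast h0
      have h2 : (Nat.gcd r m : ℤ) ∣ (r : ℤ) ^ n := by
        have h5 : (Nat.gcd r m : ℤ) ∣ (r : ℤ) := Int.natCast_dvd_natCast.2 (Nat.gcd_dvd_left r m)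
        exact h5.trans (dvd_pow_self _ (by omega : n ≠ 0))
      have h3 : (Nat.gcd r m : ℤ) ∣ (m : ℤ) := Int.natCast_dvd_natCast.2 (Nat.gcd_dvd_right r m)
      have h4 : (Nat.gcd r m : ℤ) ∣ 1 := by
        have h6 := dvd_add (h3.trans h1) h2
        simpa using h6
      have h7 : Nat.gcd r m ∣ 1 := by exact_mod_cast h4
      exact Nat.dvd_one.1 h7
    set K := Nat.gcd Y m with hK
    have hKm : K ∣ m := Nat.gcd_dvd_right Y m
    have hcop2 : Nat.Coprime (d.natAbs * r ^ j) K :=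
      Nat.Coprime.mul hg (Nat.Coprime.pow_left j (Nat.Coprime.coprime_dvd_right hKm hrm))
    set X : ℤ := d * ((r ^ j : ℕ) : ℤ) with hX
    have hIg : Int.gcd X (K : ℤ) = 1 := by
      have h1 : X.natAbs = d.natAbs * r ^ j := by
        rw [hX, Int.natAbs_mul, Int.natAbs_natCast]
      rw [Int.gcd_def, h1]
      simp only [Int.natAbs_natCast]
      exact hcop2
    have hbez1 : (1 : ℤ) = X * Int.gcdA X (K : ℤ) + (K : ℤ) * Int.gcdB X (K : ℤ) := by
      have h0 := Int.gcd_eq_gcd_ab X (K : ℤ)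
      rw [hIg] at h0
      simpa using h0
    have hbez2 : ((K : ℕ) : ℤ) = (Y : ℤ) * Nat.gcdA Y m + (m : ℤ) * Nat.gcdB Y m :=
      Nat.gcd_eq_gcd_ab Y m
    set u := Int.gcdA X (K : ℤ) with hu
    set v := Int.gcdB X (K : ℤ) with hv
    set w1 := Nat.gcdA Y m with hw1
    set w2 := Nat.gcdB Y m with hw2
    have hone : (1 : ℤ) = X * u + ((Y : ℤ) * (w1 * v) + (m : ℤ) * (w2 * v)) := by
      rw [hbez1, hbez2]; ring
    have haH : a ∈ H := by
      have hsplit : a = (a ^ X) ^ u * ((a ^ (Y : ℤ)) ^ (w1 * v) * (a ^ (m : ℤ)) ^ (w2 * v)) := by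
        rw [← zpow_mul, ← zpow_mul, ← zpow_mul, ← zpow_add, ← zpow_add, ← hone, zpow_one]
      rw [hsplit]
      refine mul_mem (zpow_mem ?_ u) (mul_mem (zpow_mem ?_ _) (zpow_mem ?_ _))
      · exact hz1H
      · rw [zpow_natCast]; exact hz2H
      · rw [zpow_natCast, ham]; exact one_mem H
    have hbjH : b ^ j ∈ H := by
      have h6 : b ^ j = (a ^ i₁)⁻¹ * x := by rw [hx]; group
      rw [h6]; exact mul_mem (inv_mem (pow_mem haH i₁)) hxH
    have hbH : b ∈ H := by
      have hbez3 : (1 : ℤ) = (j : ℤ) * Nat.gcdA j n + (n : ℤ) * Nat.gcdB j n := by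
        have h0 := Nat.gcd_eq_gcd_ab j n
        rw [hjn] at h0
        simpa using h0
      have hsplit : b = (b ^ (j : ℤ)) ^ Nat.gcdA j n * (b ^ (n : ℤ)) ^ Nat.gcdB j n := by
        rw [← zpow_mul, ← zpow_mul, ← zpow_add, ← hbez3, zpow_one]
      rw [hsplit]
      refine mul_mem (zpow_mem ?_ _) (zpow_mem ?_ _)
      · rw [zpow_natCast]; exact hbjH
      · rw [zpow_natCast, hbn]; exact one_mem H
    rw [eq_top_iff, ← hgen, Subgroup.closure_le]
    exact Set.insert_subset_iff.2 ⟨haH, Set.singleton_subset_iff.2 hbH⟩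
end
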